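/- arXiv:math/9702219 — 7 statements merged into one kernel-verified Lean document; each statement's English description precedes it below -/
import Mathlib

section
/- For a finite graph G with edge set E and a partition π of its vertex set, define ⟨G:π⟩ to be the number of edges of G whose two endpoints do not lie in a common block of π, and define Z_G(q,t) = Σ_{π ∈ Π_V} q^{⟨G:π⟩} · t_(#π), where t_(k) = t(t−1)⋯(t−k+1). Then for any non-loop edge e of G, Z_G(q,t) = q·Z_{G∖e}(q,t) + (1−q)·Z_{G/e}(q,t), where G∖e and G/e are the deletion and contraction of e. -/
open Finset

structure Multigraph where
  V : Type
  E : Type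
  [fV : Fintype V]
  [dV : DecidableEq V]
  [fE : Fintype E]
  [dE : DecidableEq E]
  ends : E → Sym2 V

namespace Multigraph

attribute [instance] Multigraph.fV Multigraph.dV Multigraph.fE Multigraph.dE

variable (G : Multigraph)

noncomputable instance : Fintype (Finpartition (Finset.univ : Finset G.V)) :=
  Fintype.ofInjective Finpartition.parts (fun P Q h => by cases P; cases Q; simpa using h)

/-- `e ≺ π` : both ends of `e` lie in a common block of `π`. -/
def EdgeIn (e : G.E) (π : Finpartition (Finset.univ : Finset G.V)) : Prop :=
  ∃ B ∈ π.parts, ∀ v ∈ G.ends e, v ∈ B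

open Classical in
/-- `⟨G : π⟩`, the number of edges not internal to a block of `π`. -/
noncomputable def crossCount (π : Finpartition (Finset.univ : Finset G.V)) : ℕ :=
  (Finset.univ.filter (fun e => ¬ G.EdgeIn e π)).card

/-- The partition-function polynomial `Z_G(q,t)` evaluated at elements of a commutative ring. -/
noncomputable def Z {R : Type*} [CommRing R] (q t : R) : R :=
  ∑ π : Finpartition (Finset.univ : Finset G.V),
    q ^ G.crossCount π * ∏ j ∈ Finset.range π.parts.card, (t - (j : R))

/-- An edge is a loop when its two endpoints coincide. -/
def IsLoopEdge (e : G.E) : Prop := (G.ends e).IsDiag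

/-- Deletion of an edge. -/
def deleteEdge (e : G.E) : Multigraph where
  V := G.V
  E := {f : G.E // f ≠ e}
  ends f := G.ends f.1

/-- The setoid identifying the two endpoints of an edge. -/
def contractSetoid (e : G.E) : Setoid G.V where
  r v w := v = w ∨ (v ∈ G.ends e ∧ w ∈ G.ends e)
  iseqv := by
    constructor
    · intro v; exact Or.inl rfl
    · rintro v w (rfl | ⟨h1, h2⟩); · exact Or.inl rfl
      · exact Or.inr ⟨h2, h1⟩
    · rintro u v w (rfl | ⟨h1, h2⟩) (rfl | ⟨h3, h4⟩)
      · exact Or.inl rfl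
      · exact Or.inr ⟨h3, h4⟩
      · exact Or.inr ⟨h1, h2⟩
      · exact Or.inr ⟨h1, h4⟩

/-- Contraction of an edge: identify its endpoints and remove it. -/
noncomputable def contractEdge (e : G.E) : Multigraph where
  V := Quotient (G.contractSetoid e)
  E := {f : G.E // f ≠ e}
  fV := @Quotient.fintype _ _ (G.contractSetoid e) (Classical.decRel _)
  dV := Classical.decEq _
  ends f := (G.ends f.1).map (Quotient.mk (G.contractSetoid e))

/-- Disjoint union of two multigraphs. -/
def disjUnion (G H : Multigraph) : Multigraph where
  V := G.V ⊕ H.V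
  E := G.E ⊕ H.E
  ends := Sum.elim (fun e => (G.ends e).map Sum.inl) (fun e => (H.ends e).map Sum.inr)

/-- The number of connected components of the spanning subgraph `(V, S)`. -/
noncomputable def compCount (S : Finset G.E) : ℕ :=
  Nat.card (Quotient (Relation.EqvGen.setoid (fun v w : G.V => ∃ f ∈ S, v ∈ G.ends f ∧ w ∈ G.ends f)))

/-- The number of connected components of `G`. -/
noncomputable def c : ℕ := G.compCount Finset.univ

/-! ### Auxiliary material for deletion–contraction -/

section Aux

variable (e : G.E)

lemma mk_eq_mk {x y : G.V} :
    Quotient.mk (G.contractSetoid e) x = Quotient.mk (G.contractSetoid e) y ↔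
      (x = y ∨ (x ∈ G.ends e ∧ y ∈ G.ends e)) := by
  rw [Quotient.eq]; exact Iff.rfl

lemma exists_mem_ends : ∃ a, a ∈ G.ends e := by
  induction (G.ends e) using Sym2.ind with
  | _ a b => exact ⟨a, Sym2.mem_mk_left a b⟩

noncomputable local instance (G : Multigraph) (e : G.E) :
    DecidableEq (Quotient (G.contractSetoid e)) := Classical.decEq _

noncomputable local instance (G : Multigraph) (e : G.E) :
    Fintype (Quotient (G.contractSetoid e)) := (G.contractEdge e).fV

variable {G e} {π : Finpartition (Finset.univ : Finset G.V)}

lemma mem_image_mk_iff (h : G.EdgeIn e π) {B : Finset G.V} (hB : B ∈ π.parts) (x : G.V) :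
    Quotient.mk (G.contractSetoid e) x ∈ B.image (Quotient.mk (G.contractSetoid e)) ↔
      x ∈ B := by
  constructor
  · intro hx
    obtain ⟨b, hb, hbx⟩ := Finset.mem_image.mp hx
    rcases (G.mk_eq_mk e).mp hbx with rfl | ⟨hbe, hxe⟩
    · exact hb
    · obtain ⟨C, hC, hCmem⟩ := h
      have hbC : b ∈ C := hCmem b hbe
      have : B = C := π.eq_of_mem_parts hB hC hb hbC
      exact this ▸ hCmem x hxe
  · exact fun hx => Finset.mem_image_of_mem _ hx

variable (e π) in
/-- Push a partition forward to the contracted graph. -/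
noncomputable def contrPart (h : G.EdgeIn e π) :
    Finpartition (Finset.univ : Finset (G.contractEdge e).V) where
  parts := π.parts.image (fun B => B.image (Quotient.mk (G.contractSetoid e)))
  supIndep := by
    rw [Finset.supIndep_iff_pairwiseDisjoint]
    intro a ha b hb hab
    simp only [Finset.coe_image, Set.mem_image, Finset.mem_coe] at ha hb
    obtain ⟨B, hB, rfl⟩ := ha
    obtain ⟨C, hC, rfl⟩ := hb
    rw [Function.onFun, Finset.disjoint_left]
    intro q hqa hqb
    induction q using Quotient.ind with
    | _ x =>
      have hxB : x ∈ B := (mem_image_mk_iff h hB x).mp hqa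
      have hxC : x ∈ C := (mem_image_mk_iff h hC x).mp hqb
      exact hab (by rw [π.eq_of_mem_parts hB hC hxB hxC])
  sup_parts := by
    apply Finset.eq_univ_of_forall
    intro q
    induction q using Quotient.ind with
    | _ x =>
      obtain ⟨B, hB, hxB⟩ := π.exists_mem (Finset.mem_univ x)
      exact Finset.mem_sup.mpr ⟨B.image (Quotient.mk (G.contractSetoid e)),
        Finset.mem_image_of_mem _ hB, Finset.mem_image_of_mem _ hxB⟩
  bot_notMem := by
    intro hbot
    obtain ⟨B, hB, hBe⟩ := Finset.mem_image.mp hbot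
    obtain ⟨x, hx⟩ := π.nonempty_of_mem_parts hB
    have : Quotient.mk (G.contractSetoid e) x ∈ (⊥ : Finset (G.contractEdge e).V) :=
      hBe ▸ Finset.mem_image_of_mem _ hx
    exact Finset.notMem_empty _ this

open Classical in
variable (e) in
/-- Pull a partition of the contracted graph back to `G`. -/
noncomputable def pullPart (σ : Finpartition (Finset.univ : Finset (G.contractEdge e).V)) :
    Finpartition (Finset.univ : Finset G.V) where
  parts := σ.parts.image
    (fun B => Finset.univ.filter (fun v => Quotient.mk (G.contractSetoid e) v ∈ B))
  supIndep := by
    rw [Finset.supIndep_iff_pairwiseDisjoint]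
    intro a ha b hb hab
    simp only [Finset.coe_image, Set.mem_image, Finset.mem_coe] at ha hb
    obtain ⟨B, hB, rfl⟩ := ha
    obtain ⟨C, hC, rfl⟩ := hb
    rw [Function.onFun, Finset.disjoint_left]
    intro x hxa hxb
    have h1 := (Finset.mem_filter.mp hxa).2
    have h2 := (Finset.mem_filter.mp hxb).2
    exact hab (by rw [σ.eq_of_mem_parts hB hC h1 h2])
  sup_parts := by
    apply Finset.eq_univ_of_forall
    intro x
    obtain ⟨B, hB, hxB⟩ := σ.exists_mem
      (Finset.mem_univ (Quotient.mk (G.contractSetoid e) x))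
    exact Finset.mem_sup.mpr ⟨_, Finset.mem_image_of_mem _ hB,
      Finset.mem_filter.mpr ⟨Finset.mem_univ x, hxB⟩⟩
  bot_notMem := by
    intro hbot
    obtain ⟨B, hB, hBe⟩ := Finset.mem_image.mp hbot
    obtain ⟨qq, hq⟩ := σ.nonempty_of_mem_parts hB
    induction qq using Quotient.ind with
    | _ x =>
      have : x ∈ (⊥ : Finset G.V) := hBe ▸ Finset.mem_filter.mpr ⟨Finset.mem_univ x, hq⟩
      simp at this

open Classical in
lemma pullPart_edgeIn (σ : Finpartition (Finset.univ : Finset (G.contractEdge e).V)) :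
    G.EdgeIn e (pullPart e σ) := by
  obtain ⟨a, ha⟩ := G.exists_mem_ends e
  obtain ⟨B, hB, haB⟩ := σ.exists_mem (Finset.mem_univ (Quotient.mk (G.contractSetoid e) a))
  refine ⟨_, Finset.mem_image_of_mem _ hB, fun v hv => ?_⟩
  refine Finset.mem_filter.mpr ⟨Finset.mem_univ v, ?_⟩
  have : Quotient.mk (G.contractSetoid e) v = Quotient.mk (G.contractSetoid e) a :=
    (G.mk_eq_mk e).mpr (Or.inr ⟨hv, ha⟩)
  rw [this]; exact haB

lemma pull_contr (h : G.EdgeIn e π) : pullPart e (contrPart e π h) = π := by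
  ext C
  constructor
  · intro hC
    obtain ⟨B', hB', rfl⟩ := Finset.mem_image.mp hC
    obtain ⟨B, hB, rfl⟩ := Finset.mem_image.mp hB'
    have : (Finset.univ.filter
        (fun v => Quotient.mk (G.contractSetoid e) v ∈
          B.image (Quotient.mk (G.contractSetoid e)))) = B := by
      ext x
      simp only [Finset.mem_filter, Finset.mem_univ, true_and]
      exact mem_image_mk_iff h hB x
    convert hB using 1; convert this; exact Iff.rfl
  · intro hC
    refine Finset.mem_image.mpr ⟨C.image (Quotient.mk (G.contractSetoid e)),
      Finset.mem_image_of_mem _ hC, ?_⟩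
    ext x
    simp only [Finset.mem_filter, Finset.mem_univ, true_and]
    exact mem_image_mk_iff h hC x

open Classical in
lemma contr_pull (σ : Finpartition (Finset.univ : Finset (G.contractEdge e).V))
    (h : G.EdgeIn e (pullPart e σ)) : contrPart e (pullPart e σ) h = σ := by
  have key : ∀ B ∈ σ.parts,
      (Finset.univ.filter (fun v => Quotient.mk (G.contractSetoid e) v ∈ B)).image
        (Quotient.mk (G.contractSetoid e)) = B := by
    intro B hB
    ext qq
    constructor
    · intro hq
      obtain ⟨x, hx, rfl⟩ := Finset.mem_image.mp hq
      exact (Finset.mem_filter.mp hx).2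
    · intro hq
      induction qq using Quotient.ind with
      | _ x => exact Finset.mem_image_of_mem _ (Finset.mem_filter.mpr ⟨Finset.mem_univ x, hq⟩)
  ext C
  constructor
  · intro hC
    obtain ⟨B', hB', rfl⟩ := Finset.mem_image.mp hC
    obtain ⟨B, hB, rfl⟩ := Finset.mem_image.mp hB'
    exact (congrArg (· ∈ σ.parts) (key B hB)).mpr hB
  · intro hC
    exact Finset.mem_image.mpr ⟨_, Finset.mem_image_of_mem _ hC, key C hC⟩

lemma contrPart_card (h : G.EdgeIn e π) :
    (contrPart e π h).parts.card = π.parts.card := by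
  apply Finset.card_image_of_injOn
  intro B hB C hC hBC
  obtain ⟨x, hx⟩ := π.nonempty_of_mem_parts hB
  have hBC' : B.image (Quotient.mk (G.contractSetoid e))
      = C.image (Quotient.mk (G.contractSetoid e)) := hBC
  have : Quotient.mk (G.contractSetoid e) x ∈
      C.image (Quotient.mk (G.contractSetoid e)) := hBC' ▸ Finset.mem_image_of_mem _ hx
  exact π.eq_of_mem_parts hB hC hx ((mem_image_mk_iff h hC x).mp this)

lemma edgeIn_contr (h : G.EdgeIn e π) (f : (G.contractEdge e).E) :
    (G.contractEdge e).EdgeIn f (contrPart e π h) ↔ G.EdgeIn f.1 π := by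
  constructor
  · rintro ⟨B', hB', hmem⟩
    obtain ⟨B, hB, rfl⟩ := Finset.mem_image.mp hB'
    refine ⟨B, hB, fun v hv => ?_⟩
    have : Quotient.mk (G.contractSetoid e) v ∈ (G.contractEdge e).ends f :=
      Sym2.mem_map.mpr ⟨v, hv, rfl⟩
    exact (mem_image_mk_iff h hB v).mp (hmem _ this)
  · rintro ⟨B, hB, hmem⟩
    refine ⟨B.image (Quotient.mk (G.contractSetoid e)), Finset.mem_image_of_mem _ hB,
      fun qq hq => ?_⟩
    obtain ⟨v, hv, rfl⟩ := Sym2.mem_map.mp hq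
    exact Finset.mem_image_of_mem _ (hmem v hv)

lemma crossCount_contr (h : G.EdgeIn e π) :
    (G.contractEdge e).crossCount (contrPart e π h) = (G.deleteEdge e).crossCount π := by
  classical
  unfold crossCount
  congr 1
  apply Finset.filter_congr
  intro f _
  rw [not_iff_not]
  exact (edgeIn_contr h f).trans Iff.rfl

open Classical in
lemma crossCount_split (π : Finpartition (Finset.univ : Finset G.V)) :
    G.crossCount π = (if G.EdgeIn e π then 0 else 1) + (G.deleteEdge e).crossCount π := by
  unfold crossCount
  rw [Finset.card_filter, Finset.card_filter,
    ← Finset.add_sum_erase _ _ (Finset.mem_univ e)]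
  congr 1
  · by_cases h : G.EdgeIn e π <;> simp [h]
  · rw [Finset.sum_subtype (p := fun f => f ≠ e) (Finset.univ.erase e) (by simp)
      (fun f => if ¬ G.EdgeIn f π then 1 else 0)]
    exact Finset.sum_congr rfl (fun f _ => if_congr Iff.rfl rfl rfl)

end Aux

end Multigraph

/-- deletion–contraction for `Z_G` at a non-loop edge. -/
theorem Z_deletion_contraction (G : Multigraph) (e : G.E) (he : ¬ G.IsLoopEdge e)
    {R : Type*} [CommRing R] (q t : R) :
    G.Z q t = q * (G.deleteEdge e).Z q t + (1 - q) * (G.contractEdge e).Z q t := by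
  classical
  have hdel : (G.deleteEdge e).Z q t
      = ∑ π : Finpartition (Finset.univ : Finset G.V),
          q ^ (G.deleteEdge e).crossCount π
            * ∏ j ∈ Finset.range π.parts.card, (t - (j : R)) := rfl
  have hG : G.Z q t
      = ∑ π : Finpartition (Finset.univ : Finset G.V),
          (q * (q ^ (G.deleteEdge e).crossCount π
              * ∏ j ∈ Finset.range π.parts.card, (t - (j : R)))
            + (if G.EdgeIn e π then
                (1 - q) * (q ^ (G.deleteEdge e).crossCount π
                  * ∏ j ∈ Finset.range π.parts.card, (t - (j : R))) else 0)) := by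
    unfold Multigraph.Z
    refine Finset.sum_congr rfl (fun π _ => ?_)
    rw [Multigraph.crossCount_split (e := e)]
    by_cases h : G.EdgeIn e π
    · simp only [h, if_true, if_pos, zero_add]
      ring
    · simp only [h, if_false, if_neg, not_false_iff, add_zero, pow_add, pow_one]
      ring
  rw [hG, Finset.sum_add_distrib, ← Finset.mul_sum, ← hdel]
  congr 1
  rw [← Finset.sum_filter, ← Finset.mul_sum]
  congr 1
  unfold Multigraph.Z
  refine Finset.sum_bij'
    (fun π hπ => Multigraph.contrPart e π (Finset.mem_filter.mp hπ).2)
    (fun σ _ => Multigraph.pullPart e σ)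
    (fun π hπ => Finset.mem_univ _)
    (fun σ hσ => Finset.mem_filter.mpr ⟨Finset.mem_univ _, Multigraph.pullPart_edgeIn σ⟩)
    (fun π hπ => Multigraph.pull_contr (Finset.mem_filter.mp hπ).2)
    (fun σ hσ => Multigraph.contr_pull σ _)
    (fun π hπ => ?_)
  rw [Multigraph.crossCount_contr (Finset.mem_filter.mp hπ).2,
    Multigraph.contrPart_card (Finset.mem_filter.mp hπ).2]
end

section
/- For any finite graph G with c(G) connected components, t^{c(G)} divides the polynomial Z_G(q,t) in ℤ[q,t]. -/
open Finset

open MvPolynomial in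
/-- The polynomial `Z_G(q,t)` as an element of `ℤ[q,t]`, with variable `0` playing the
role of `q` and variable `1` the role of `t`. -/
noncomputable def Multigraph.Zpoly (G : Multigraph) : MvPolynomial (Fin 2) ℤ :=
  ∑ π : Finpartition (Finset.univ : Finset G.V),
    (X 0) ^ G.crossCount π * ∏ j ∈ Finset.range π.parts.card, (X 1 - C (j : ℤ))


open Finset MvPolynomial

lemma prodRangeCastSub {R : Type*} [CommRing R] (n k : ℕ) :
    ∏ j ∈ Finset.range k, ((n : R) - (j : R)) = (n.descFactorial k : R) := by
  induction k with
  | zero => simp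
  | succ k ih =>
    rw [Finset.prod_range_succ, ih, Nat.descFactorial_succ]
    rcases le_or_gt k n with h | h
    · push_cast [Nat.cast_sub h]; ring
    · rw [Nat.descFactorial_eq_zero_iff_lt.2 h]
      simp

noncomputable def evA (n : ℕ) : MvPolynomial (Fin 2) ℤ →ₐ[ℤ] MvPolynomial (Fin 1) ℤ :=
  aeval ![X 0, C (n : ℤ)]

@[simp] lemma evA_X0 (n : ℕ) : evA n (X 0) = X 0 := by simp [evA]
@[simp] lemma evA_X1 (n : ℕ) : evA n (X 1) = C (n : ℤ) := by simp [evA]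

noncomputable def Phi : MvPolynomial (Fin 2) ℤ ≃ₐ[ℤ] Polynomial (MvPolynomial (Fin 1) ℤ) :=
  (renameEquiv ℤ ((Equiv.swap 0 1).trans (finSuccEquiv 1))).trans (optionEquivLeft ℤ (Fin 1))

lemma eval_Phi (p : MvPolynomial (Fin 2) ℤ) (n : ℕ) :
    Polynomial.eval ((n : MvPolynomial (Fin 1) ℤ)) (Phi p) = evA n p := by
  have h : (Polynomial.evalRingHom ((n : MvPolynomial (Fin 1) ℤ))).comp
      (Phi : MvPolynomial (Fin 2) ℤ →+* Polynomial (MvPolynomial (Fin 1) ℤ))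
      = (evA n : MvPolynomial (Fin 2) ℤ →+* MvPolynomial (Fin 1) ℤ) := by
    apply MvPolynomial.ringHom_ext
    · intro a
      simp [Phi, evA, optionEquivLeft_C]
    · intro i
      have h1 : (_root_.finSuccEquiv 1) (1 : Fin 2) = some 0 := rfl
      have h0 : (_root_.finSuccEquiv 1) (0 : Fin 2) = none := rfl
      fin_cases i
      · simp [Phi, evA, optionEquivLeft_X_some, h1]
      · simp [Phi, evA, optionEquivLeft_X_none, h0]
  exact congrFun (congrArg (fun f => f.toFun) h) p

lemma evA_inj {p r : MvPolynomial (Fin 2) ℤ} (h : ∀ n : ℕ, evA n p = evA n r) : p = r := by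
  have hz : Phi (p - r) = 0 := by
    apply Polynomial.eq_zero_of_infinite_isRoot
    apply Set.Infinite.mono (s := Set.range (Nat.cast : ℕ → MvPolynomial (Fin 1) ℤ))
    · rintro _ ⟨n, rfl⟩
      simp only [Set.mem_setOf_eq, Polynomial.IsRoot, map_sub, Polynomial.eval_sub, eval_Phi, h n,
        sub_self]
    · exact Set.infinite_range_of_injective Nat.cast_injective
  have : p - r = 0 := Phi.injective (by simpa using hz)
  exact sub_eq_zero.mp this

open MvPolynomial

section Coloring

variable {α : Type*} [Fintype α] [DecidableEq α] {n : ℕ}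


open Classical in
noncomputable def fpc (f : α → Fin n) : Finpartition (Finset.univ : Finset α) :=
  Finpartition.ofSetoid (Setoid.ker f)

open Classical in
lemma mem_part_fpc (f : α → Fin n) (a b : α) : b ∈ (fpc f).part a ↔ f a = f b :=
  Finpartition.mem_part_ofSetoid_iff_rel

lemma parts_eq_of_part_eq {P Q : Finpartition (Finset.univ : Finset α)}
    (h : ∀ a, P.part a = Q.part a) : P = Q := by
  have : P.parts = Q.parts := by
    ext B
    constructor
    · intro hB
      obtain ⟨a, ha⟩ := P.nonempty_of_mem_parts hB
      have : B = Q.part a := by rw [← h a]; exact (P.part_eq_of_mem hB ha).symm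
      exact this ▸ Q.part_mem.2 (mem_univ a)
    · intro hB
      obtain ⟨a, ha⟩ := Q.nonempty_of_mem_parts hB
      have : B = P.part a := by rw [h a]; exact (Q.part_eq_of_mem hB ha).symm
      exact this ▸ P.part_mem.2 (mem_univ a)
  cases P; cases Q; simpa using this

open Classical in
noncomputable def colorEquiv (π : Finpartition (Finset.univ : Finset α)) :
    {f : α → Fin n // fpc f = π} ≃ (↥π.parts ↪ Fin n) where
  toFun fh := ⟨fun B => fh.1 (π.nonempty_of_mem_parts B.2).choose, by
    rintro ⟨B, hB⟩ ⟨B', hB'⟩ hval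
    obtain ⟨f, hf⟩ := fh
    simp only at hval
    have hmem : (π.nonempty_of_mem_parts hB).choose ∈ B := (π.nonempty_of_mem_parts hB).choose_spec
    have hmem' : (π.nonempty_of_mem_parts hB').choose ∈ B' :=
      (π.nonempty_of_mem_parts hB').choose_spec
    have h1 : π.part (π.nonempty_of_mem_parts hB).choose = B := π.part_eq_of_mem hB hmem
    have h2 : π.part (π.nonempty_of_mem_parts hB').choose = B' := π.part_eq_of_mem hB' hmem'
    have : (π.nonempty_of_mem_parts hB').choose ∈ (fpc f).part (π.nonempty_of_mem_parts hB).choose :=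
      (mem_part_fpc f _ _).2 hval
    rw [hf, h1] at this
    simp only [Subtype.mk.injEq]
    rw [← h2]
    exact (π.part_eq_of_mem hB this).symm⟩
  invFun g := ⟨fun a => g ⟨π.part a, π.part_mem.2 (mem_univ a)⟩, by
    apply parts_eq_of_part_eq
    intro a
    ext b
    rw [mem_part_fpc]
    constructor
    · intro hgab
      have : (⟨π.part a, π.part_mem.2 (mem_univ a)⟩ : ↥π.parts) = ⟨π.part b, π.part_mem.2 (mem_univ b)⟩ :=
        g.injective hgab
      have hab : π.part a = π.part b := by simpa using this
      exact hab ▸ π.mem_part (mem_univ b)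
    · intro hb
      have hab : π.part b = π.part a := π.part_eq_of_mem (π.part_mem.2 (mem_univ a)) hb
      congr 1
      exact Subtype.ext hab.symm⟩
  left_inv := by
    rintro ⟨f, hf⟩
    apply Subtype.ext
    funext a
    simp only [Function.Embedding.coeFn_mk]
    have key : ∀ y, y ∈ π.part a → f y = f a := by
      intro y hy
      have : y ∈ (fpc f).part a := by rw [hf]; exact hy
      exact ((mem_part_fpc f a y).1 this).symm
    exact key _ ((π.nonempty_of_mem_parts (π.part_mem.2 (mem_univ a))).choose_spec)
  right_inv := by
    intro g
    ext B
    obtain ⟨B, hB⟩ := B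
    simp only [Function.Embedding.coeFn_mk]
    have h : π.part ((π.nonempty_of_mem_parts hB).choose) = B :=
      π.part_eq_of_mem hB ((π.nonempty_of_mem_parts hB).choose_spec)
    have h2 : (⟨π.part ((π.nonempty_of_mem_parts hB).choose),
        π.part_mem.2 (mem_univ _)⟩ : ↥π.parts) = ⟨B, hB⟩ := Subtype.ext h
    exact congrArg (fun x => ((g x : Fin n) : ℕ)) h2

end Coloring

open Classical in
lemma card_colorings {α : Type*} [Fintype α] [DecidableEq α]
    (π : Finpartition (Finset.univ : Finset α)) (n : ℕ) :
    (Finset.univ.filter fun f : α → Fin n => fpc f = π).card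
      = n.descFactorial π.parts.card := by
  rw [← Fintype.card_subtype, Fintype.card_congr (colorEquiv π), Fintype.card_embedding_eq,
    Fintype.card_fin, Fintype.card_coe]

open Classical in
lemma sum_colorings {α : Type*} [Fintype α] [DecidableEq α]
    [Fintype (Finpartition (Finset.univ : Finset α))] {M : Type*} [AddCommMonoid M] (n : ℕ)
    (w : Finpartition (Finset.univ : Finset α) → M) :
    ∑ f : α → Fin n, w (fpc f)
      = ∑ π : Finpartition (Finset.univ : Finset α), n.descFactorial π.parts.card • w π := by
  rw [← Finset.sum_fiberwise Finset.univ (fun f : α → Fin n => fpc f) (fun f => w (fpc f))]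
  apply Finset.sum_congr rfl
  intro π _
  rw [Finset.sum_congr rfl (fun f hf => by rw [(Finset.mem_filter.1 hf).2]),
    Finset.sum_const, card_colorings]

open Classical in
noncomputable def crossF (H : Multigraph) {n : ℕ} (f : H.V → Fin n) : ℕ :=
  (Finset.univ.filter fun e => ¬ ∀ v ∈ H.ends e, ∀ w ∈ H.ends e, f v = f w).card

lemma EdgeIn_fpc (H : Multigraph) {n : ℕ} (f : H.V → Fin n) (e : H.E) :
    H.EdgeIn e (fpc f) ↔ ∀ v ∈ H.ends e, ∀ w ∈ H.ends e, f v = f w := by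
  constructor
  · rintro ⟨B, hB, hsub⟩ v hv w hw
    obtain ⟨a, ha⟩ := (fpc f).nonempty_of_mem_parts hB
    have h1 : B = (fpc f).part a := ((fpc f).part_eq_of_mem hB ha).symm
    have hv' : f a = f v := (mem_part_fpc f a v).1 (h1 ▸ hsub v hv)
    have hw' : f a = f w := (mem_part_fpc f a w).1 (h1 ▸ hsub w hw)
    rw [← hv', hw']
  · intro hconst
    refine ⟨(fpc f).part ((H.ends e).out.1), (fpc f).part_mem.2 (mem_univ _), ?_⟩
    intro v hv
    exact (mem_part_fpc f _ v).2 (hconst _ (Sym2.out_fst_mem _) v hv)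

open Classical in
lemma crossCount_fpc (H : Multigraph) {n : ℕ} (f : H.V → Fin n) :
    H.crossCount (fpc f) = crossF H f := by
  unfold Multigraph.crossCount crossF
  congr 1
  apply Finset.filter_congr
  intro e _
  rw [EdgeIn_fpc]

open Classical in
lemma evA_Zpoly (H : Multigraph) (n : ℕ) :
    evA n H.Zpoly = ∑ f : H.V → Fin n, (X 0 : MvPolynomial (Fin 1) ℤ) ^ crossF H f := by
  have h2 : ∑ f : H.V → Fin n, (X 0 : MvPolynomial (Fin 1) ℤ) ^ crossF H f
      = ∑ π : Finpartition (Finset.univ : Finset H.V),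
          n.descFactorial π.parts.card • (X 0 : MvPolynomial (Fin 1) ℤ) ^ H.crossCount π := by
    rw [← sum_colorings n (fun π => (X 0 : MvPolynomial (Fin 1) ℤ) ^ H.crossCount π)]
    exact Finset.sum_congr rfl fun f _ => by rw [crossCount_fpc]
  rw [h2]
  unfold Multigraph.Zpoly
  rw [map_sum]
  apply Finset.sum_congr rfl
  intro π _
  rw [map_mul, map_pow, evA_X0]
  have h3 : evA n (∏ j ∈ Finset.range π.parts.card, (X 1 - C (j : ℤ)))
      = C ((n.descFactorial π.parts.card : ℤ)) := by
    rw [map_prod]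
    have : ∀ j ∈ Finset.range π.parts.card, evA n (X 1 - C (j : ℤ)) = C ((n : ℤ) - (j : ℤ)) := by
      intro j _
      rw [map_sub, evA_X1, show (evA n) (C (j : ℤ)) = C (j : ℤ) from by simp [evA], map_sub]
    rw [Finset.prod_congr rfl this, ← map_prod, prodRangeCastSub]
  rw [h3, nsmul_eq_mul, mul_comm]
  congr 1

lemma Sym2.mem_attachWith {α : Type*} {P : α → Prop} {z : Sym2 α} (h : ∀ a ∈ z, P a)
    (b : {a // P a}) : b ∈ z.attachWith h ↔ b.1 ∈ z := by
  unfold Sym2.attachWith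
  rw [Sym2.mem_pmap_iff]
  constructor
  · rintro ⟨a, ha, rfl⟩; exact ha
  · intro hb; exact ⟨b.1, hb, Subtype.ext rfl⟩

section Components

variable (G : Multigraph)

def CompT : Type :=
  Quotient (Relation.EqvGen.setoid
    (fun v w : G.V => ∃ f ∈ (Finset.univ : Finset G.E), v ∈ G.ends f ∧ w ∈ G.ends f))

noncomputable instance : Fintype (CompT G) := @Quotient.fintype _ _ _ (Classical.decRel _)

def vcomp (v : G.V) : CompT G := Quotient.mk _ v

lemma cmp_eq_of_mem_ends {e : G.E} {v w : G.V} (hv : v ∈ G.ends e) (hw : w ∈ G.ends e) :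
    vcomp G v = vcomp G w :=
  Quotient.sound (Relation.EqvGen.rel _ _ ⟨e, Finset.mem_univ e, hv, hw⟩)

noncomputable def ecomp (e : G.E) : CompT G := vcomp G ((G.ends e).out.1)

lemma cmp_eq_ecomp {e : G.E} {v : G.V} (hv : v ∈ G.ends e) : vcomp G v = ecomp G e :=
  cmp_eq_of_mem_ends G hv (Sym2.out_fst_mem _)

noncomputable def comp (k : CompT G) : Multigraph where
  V := {v : G.V // vcomp G v = k}
  E := {e : G.E // ecomp G e = k}
  fV := Fintype.ofFinite _
  dV := Classical.decEq _
  fE := Fintype.ofFinite _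
  dE := Classical.decEq _
  ends e := (G.ends e.1).attachWith (fun v hv => (cmp_eq_ecomp G hv).trans e.2)

lemma const_iff (k : CompT G) (e : (comp G k).E) {n : ℕ} (f : G.V → Fin n) :
    (∀ v ∈ (comp G k).ends e, ∀ w ∈ (comp G k).ends e, f v.1 = f w.1) ↔
    (∀ v ∈ G.ends e.1, ∀ w ∈ G.ends e.1, f v = f w) := by
  constructor
  · intro h v hv w hw
    exact h ⟨v, (cmp_eq_ecomp G hv).trans e.2⟩ ((Sym2.mem_attachWith _ _).2 hv)
      ⟨w, (cmp_eq_ecomp G hw).trans e.2⟩ ((Sym2.mem_attachWith _ _).2 hw)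
  · intro h v hv w hw
    exact h v.1 ((Sym2.mem_attachWith _ _).1 hv) w.1 ((Sym2.mem_attachWith _ _).1 hw)

lemma sum_univ_eq {ι M : Type*} [AddCommMonoid M] (h1 h2 : Fintype ι) (f : ι → M) :
    @Finset.sum ι M _ (@Finset.univ ι h1) f = @Finset.sum ι M _ (@Finset.univ ι h2) f := by
  rw [Subsingleton.elim h1 h2]

open Classical in
lemma crossF_eq_sum {n : ℕ} (f : G.V → Fin n) :
    crossF G f = ∑ k : CompT G, crossF (comp G k) (fun v => f v.1) := by
  have key : ∀ (k : CompT G), crossF (comp G k) (fun v : (comp G k).V => f v.1)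
      = ∑ e ∈ Finset.univ.filter (fun e => ecomp G e = k),
          if ¬ ∀ v ∈ G.ends e, ∀ w ∈ G.ends e, f v = f w then 1 else 0 := by
    intro k
    classical
    unfold crossF
    rw [Finset.card_filter]
    have e1 : (∑ e : (comp G k).E,
          if ¬ ∀ v ∈ (comp G k).ends e, ∀ w ∈ (comp G k).ends e, f v.1 = f w.1 then 1 else 0)
        = ∑ e : (comp G k).E,
          if ¬ ∀ v ∈ G.ends e.1, ∀ w ∈ G.ends e.1, f v = f w then 1 else 0 := by
      apply Finset.sum_congr rfl
      intro e _
      congr 1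
      rw [eq_iff_iff]
      exact not_congr (const_iff G k e f)
    have e2 : (∑ e : (comp G k).E,
          if ¬ ∀ v ∈ G.ends e.1, ∀ w ∈ G.ends e.1, f v = f w then 1 else 0)
        = ∑ e : {e : G.E // ecomp G e = k},
          if ¬ ∀ v ∈ G.ends e.1, ∀ w ∈ G.ends e.1, f v = f w then 1 else 0 :=
      sum_univ_eq _ _ _
    have hsub := Finset.sum_subtype (s := Finset.univ.filter fun e => ecomp G e = k)
      (p := fun e => ecomp G e = k) (F := inferInstance) (by simp)
      (fun e => if ¬ ∀ v ∈ G.ends e, ∀ w ∈ G.ends e, f v = f w then 1 else 0)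
    rw [e1, e2, ← hsub]
  rw [Finset.sum_congr rfl (fun k _ => key k),
    Finset.sum_fiberwise Finset.univ (ecomp G)
      (fun e => if ¬ ∀ v ∈ G.ends e, ∀ w ∈ G.ends e, f v = f w then 1 else 0)]
  unfold crossF
  rw [Finset.card_filter]

open Classical in
noncomputable def colorSplit (n : ℕ) : (G.V → Fin n) ≃ Π k : CompT G, ((comp G k).V → Fin n) where
  toFun f k v := f v.1
  invFun F v := F (vcomp G v) ⟨v, rfl⟩
  left_inv f := rfl
  right_inv F := by
    funext k v
    obtain ⟨v, hv⟩ := v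
    subst hv
    rfl

open Classical in
lemma sum_colorF_eq_prod (n : ℕ) :
    ∑ f : G.V → Fin n, (X 0 : MvPolynomial (Fin 1) ℤ) ^ crossF G f
      = ∏ k : CompT G, ∑ g : (comp G k).V → Fin n,
          (X 0 : MvPolynomial (Fin 1) ℤ) ^ crossF (comp G k) g := by
  rw [Finset.prod_univ_sum, Fintype.piFinset_univ]
  apply Fintype.sum_equiv (colorSplit G n)
  intro f
  rw [Finset.prod_pow_eq_pow_sum]
  congr 1
  exact crossF_eq_sum G f

lemma Zpoly_eq_prod : G.Zpoly = ∏ k : CompT G, (comp G k).Zpoly := by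
  apply evA_inj; intro n
  rw [map_prod, evA_Zpoly, sum_colorF_eq_prod]
  exact Finset.prod_congr rfl fun k _ => (evA_Zpoly _ n).symm

lemma X1_dvd_Zpoly_comp (k : CompT G) :
    (X 1 : MvPolynomial (Fin 2) ℤ) ∣ (comp G k).Zpoly := by
  unfold Multigraph.Zpoly
  apply Finset.dvd_sum
  intro π _
  apply Dvd.dvd.mul_left
  have hne : (Finset.univ : Finset (comp G k).V).Nonempty := by
    obtain ⟨v, hv⟩ := Quotient.exists_rep k
    exact ⟨⟨v, hv⟩, Finset.mem_univ _⟩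
  have hparts : π.parts.Nonempty := π.parts_nonempty (by
    rw [Finset.bot_eq_empty]
    exact hne.ne_empty)
  have h0 : 0 ∈ Finset.range π.parts.card := by
    rw [Finset.mem_range]
    exact Finset.card_pos.2 hparts
  have := Finset.dvd_prod_of_mem
    (fun j : ℕ => (X 1 : MvPolynomial (Fin 2) ℤ) - C (j : ℤ)) h0
  simpa using this

end Components

/-- `t^{c(G)}` divides `Z_G(q,t)` in `ℤ[q,t]`. -/
theorem t_pow_components_dvd_Zpoly (G : Multigraph) :
    (MvPolynomial.X 1 : MvPolynomial (Fin 2) ℤ) ^ G.c ∣ G.Zpoly := by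
  have hc : G.c = Fintype.card (CompT G) := by
    rw [show G.c = Nat.card (CompT G) from rfl, Nat.card_eq_fintype_card]
  rw [Zpoly_eq_prod G, hc, ← Finset.card_univ, ← Finset.prod_const]
  exact Finset.prod_dvd_prod_of_dvd _ _ (fun k _ => X1_dvd_Zpoly_comp G k)
end

section
/- Let G be a finite graph and t a natural number. For every k ∈ ℕ, the coefficient of q^k in Z_G(q,t) equals the number of functions f : V → {1,…,t} for which exactly k edges e = {u,v} of G satisfy f(u) ≠ f(v). -/
open Finset

open Classical in
/-- The number of edges of `G` that are proper with respect to the colouring `f`. -/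
noncomputable def Multigraph.properCount (G : Multigraph) {t : ℕ} (f : G.V → Fin t) : ℕ :=
  (Finset.univ.filter (fun e => ¬ ((G.ends e).map f).IsDiag)).card

namespace Multigraph

variable {G : Multigraph} {t : ℕ}

/-- kernel partition of a colouring -/
noncomputable def kp (G : Multigraph) {t : ℕ} (f : G.V → Fin t) :
    Finpartition (Finset.univ : Finset G.V) :=
  @Finpartition.ofSetoid _ _ _ (Setoid.ker f) (Classical.decRel _)

lemma mem_part_kp (f : G.V → Fin t) (u v : G.V) :
    v ∈ (G.kp f).part u ↔ f u = f v := by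
  rw [kp]
  exact (@Finpartition.mem_part_ofSetoid_iff_rel G.V _ u _ (Setoid.ker f)
    (Classical.decRel _) v).trans Setoid.ker_def

lemma parts_eq_image_part {α : Type*} [DecidableEq α] [Fintype α]
    (P : Finpartition (Finset.univ : Finset α)) :
    P.parts = Finset.univ.image P.part := by
  ext B
  simp only [Finset.mem_image, Finset.mem_univ, true_and]
  constructor
  · intro hB
    obtain ⟨x, hx⟩ := P.nonempty_of_mem_parts hB
    exact ⟨x, P.part_eq_of_mem hB hx⟩
  · rintro ⟨x, rfl⟩
    exact P.part_mem.mpr (Finset.mem_univ x)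

lemma finpartition_ext {α : Type*} [DecidableEq α] [Fintype α]
    {P Q : Finpartition (Finset.univ : Finset α)} (h : P.parts = Q.parts) : P = Q := by
  cases P; cases Q; simpa using h

lemma edgeIn_kp_iff (f : G.V → Fin t) (e : G.E) :
    G.EdgeIn e (G.kp f) ↔ ((G.ends e).map f).IsDiag := by
  obtain ⟨u, v, hE⟩ : ∃ x y, G.ends e = s(x, y) := by
    induction (G.ends e) using Sym2.inductionOn with
    | hf x y => exact ⟨x, y, rfl⟩
  unfold EdgeIn
  rw [hE, Sym2.map_pair_eq, Sym2.mk_isDiag_iff]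
  constructor
  · rintro ⟨B, hB, hmem⟩
    have hu : u ∈ B := hmem u (Sym2.mem_mk_left u v)
    have hv : v ∈ B := hmem v (Sym2.mem_mk_right u v)
    have := (G.kp f).part_eq_of_mem hB hu
    rw [← this] at hv
    exact (mem_part_kp f u v).mp hv
  · intro hfv
    refine ⟨(G.kp f).part u, (G.kp f).part_mem.mpr (Finset.mem_univ u), ?_⟩
    intro x hx
    rcases Sym2.mem_iff.mp hx with rfl | rfl
    · exact (G.kp f).mem_part (Finset.mem_univ x)
    · exact (mem_part_kp f u x).mpr hfv

lemma properCount_eq_crossCount_kp (f : G.V → Fin t) :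
    G.properCount f = G.crossCount (G.kp f) := by
  classical
  unfold properCount crossCount
  congr 1
  apply Finset.filter_congr
  intro e _
  rw [edgeIn_kp_iff]

end Multigraph

namespace Multigraph

variable {G : Multigraph} {t : ℕ}

lemma cast_descFactorial_eq (t m : ℕ) :
    ((t.descFactorial m : ℕ) : ℤ) = ∏ j ∈ Finset.range m, ((t : ℤ) - (j : ℤ)) := by
  induction m with
  | zero => simp
  | succ m ih =>
    rw [Finset.prod_range_succ, ← ih, Nat.descFactorial_succ]
    by_cases h : m ≤ t
    · rw [Nat.cast_mul, Nat.cast_sub h]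
      ring
    · have h0 : t.descFactorial m = 0 := Nat.descFactorial_of_lt (by omega)
      rw [h0]
      simp

open Classical in
lemma card_kp_fiber (π : Finpartition (Finset.univ : Finset G.V)) :
    Nat.card {f : G.V → Fin t // G.kp f = π} = t.descFactorial π.parts.card := by
  classical
  have kp_eq : ∀ g : {B // B ∈ π.parts} ↪ Fin t,
      G.kp (fun v => g ⟨π.part v, π.part_mem.mpr (Finset.mem_univ v)⟩) = π := by
    intro g
    apply finpartition_ext
    have hpart : ∀ v, (G.kp (fun v => g ⟨π.part v,
        π.part_mem.mpr (Finset.mem_univ v)⟩)).part v = π.part v := by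
      intro v
      ext w
      rw [mem_part_kp, π.mem_part_iff_part_eq_part (Finset.mem_univ w) (Finset.mem_univ v)]
      constructor
      · intro h
        exact (Subtype.ext_iff.mp (g.injective h)).symm
      · intro h
        congr 1
        exact Subtype.ext h.symm
    exact (parts_eq_image_part _).trans
      ((Finset.image_congr (fun v _ => hpart v)).trans (parts_eq_image_part π).symm)
  set Φ : ({B // B ∈ π.parts} ↪ Fin t) → {f : G.V → Fin t // G.kp f = π} :=
    fun g => ⟨fun v => g ⟨π.part v, π.part_mem.mpr (Finset.mem_univ v)⟩, kp_eq g⟩ with hΦ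
  have hinj : Function.Injective Φ := by
    intro g₁ g₂ h
    ext B
    obtain ⟨x, hx⟩ := π.nonempty_of_mem_parts B.2
    have hx' : (⟨π.part x, π.part_mem.mpr (Finset.mem_univ x)⟩ : {B // B ∈ π.parts}) = B :=
      Subtype.ext (π.part_eq_of_mem B.2 hx)
    have h2 := congrFun (Subtype.ext_iff.mp h) x
    have h3 : g₁ B = g₂ B := by simpa [Φ, hx'] using h2
    exact congrArg Fin.val h3
  have hsurj : Function.Surjective Φ := by
    rintro ⟨f, hf⟩
    have key : ∀ v w : G.V, f v = f w ↔ π.part w = π.part v := by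
      intro v w
      rw [← hf, ← mem_part_kp f v w,
        (G.kp f).mem_part_iff_part_eq_part (Finset.mem_univ w) (Finset.mem_univ v)]
    have g0inj : Function.Injective
        (fun B : {B // B ∈ π.parts} => f (π.nonempty_of_mem_parts B.2).choose) := by
      intro B C h
      have hB := (π.nonempty_of_mem_parts B.2).choose_spec
      have hC := (π.nonempty_of_mem_parts C.2).choose_spec
      have h2 := (key _ _).mp h
      rw [π.part_eq_of_mem B.2 hB, π.part_eq_of_mem C.2 hC] at h2
      exact Subtype.ext h2.symm
    refine ⟨⟨_, g0inj⟩, ?_⟩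
    apply Subtype.ext
    funext v
    have hc := (π.nonempty_of_mem_parts (π.part_mem.mpr (Finset.mem_univ v))).choose_spec
    exact ((key v _).mpr (π.part_eq_of_mem (π.part_mem.mpr (Finset.mem_univ v)) hc)).symm
  rw [← Nat.card_eq_of_bijective Φ ⟨hinj, hsurj⟩, Nat.card_eq_fintype_card,
    Fintype.card_embedding_eq, Fintype.card_coe, Fintype.card_fin]

end Multigraph

/-- `Z_G(q,t)` for a fixed natural number `t`, as a polynomial in `q` over `ℤ`. -/
noncomputable def Multigraph.ZqPoly (G : Multigraph) (t : ℕ) : Polynomial ℤ :=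
  ∑ π : Finpartition (Finset.univ : Finset G.V),
    (Polynomial.X : Polynomial ℤ) ^ G.crossCount π *
      Polynomial.C (∏ j ∈ Finset.range π.parts.card, ((t : ℤ) - (j : ℤ)))

/-- `[q^k] Z_G(q,t)` is the number of `t`-colourings of `G` with exactly
`k` proper edges. -/
theorem coeff_ZqPoly (G : Multigraph) (t k : ℕ) :
    (G.ZqPoly t).coeff k =
      (Nat.card {f : G.V → Fin t // G.properCount f = k} : ℤ) := by
  classical
  rw [Nat.card_eq_fintype_card, Fintype.card_subtype]
  unfold Multigraph.ZqPoly
  rw [Polynomial.finset_sum_coeff]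
  have step1 : ∀ π : Finpartition (Finset.univ : Finset G.V),
      ((Polynomial.X : Polynomial ℤ) ^ G.crossCount π *
        Polynomial.C (∏ j ∈ Finset.range π.parts.card, ((t : ℤ) - (j : ℤ)))).coeff k
      = ((Finset.univ.filter
          (fun f : G.V → Fin t => G.properCount f = k ∧ G.kp f = π)).card : ℤ) := by
    intro π
    rw [mul_comm, Polynomial.C_mul_X_pow_eq_monomial, Polynomial.coeff_monomial]
    have hprod : (∏ j ∈ Finset.range π.parts.card, ((t : ℤ) - (j : ℤ)))
        = ((Finset.univ.filter (fun f : G.V → Fin t => G.kp f = π)).card : ℤ) := by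
      rw [← Multigraph.cast_descFactorial_eq, ← Multigraph.card_kp_fiber (G := G) π,
        Nat.card_eq_fintype_card, Fintype.card_subtype]
    by_cases h : G.crossCount π = k
    · rw [if_pos h, hprod]
      norm_cast
      congr 1
      apply Finset.filter_congr
      intro f _
      constructor
      · intro hkp
        exact ⟨by rw [Multigraph.properCount_eq_crossCount_kp f, hkp, h], hkp⟩
      · exact fun h' => h'.2
    · rw [if_neg h]
      symm
      norm_cast
      rw [Finset.card_eq_zero, Finset.filter_eq_empty_iff]
      intro f _
      rintro ⟨h1, h2⟩
      exact h (by rw [← h2, ← Multigraph.properCount_eq_crossCount_kp f, h1])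
  rw [Finset.sum_congr rfl (fun π _ => step1 π),
    Finset.card_eq_sum_card_fiberwise
      (fun (f : G.V → Fin t) (_ : f ∈ Finset.univ.filter
        (fun f : G.V → Fin t => G.properCount f = k)) => Finset.mem_univ (G.kp f))]
  push_cast
  apply Finset.sum_congr rfl
  intro π _
  rw [Finset.filter_filter]
end

section
/- Let G be a finite graph with m edges and t a natural number. Then the coefficient of q^m in Z_G(q,t) equals the number of proper t-colourings of G, i.e., the value at t of the chromatic polynomial of G. -/
open Finset

section Aux

open Finset

lemma prod_range_cast_sub_descFactorial (t k : ℕ) :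
    (∏ j ∈ Finset.range k, ((t : ℤ) - (j : ℤ))) = (t.descFactorial k : ℤ) := by
  induction k with
  | zero => simp
  | succ k ih =>
    rw [Finset.prod_range_succ, ih, Nat.descFactorial_succ, Nat.cast_mul]
    rcases le_or_gt k t with h | h
    · rw [Nat.cast_sub h]; ring
    · have h0 : t.descFactorial k = 0 := Nat.descFactorial_eq_zero_iff_lt.mpr h
      simp [h0]

lemma Sym2.exists_eq' {α : Type*} (p : Sym2 α) : ∃ x y, p = s(x, y) :=
  Sym2.inductionOn p fun x y => ⟨x, y, rfl⟩

lemma Finpartition.ext' {α : Type*} [DecidableEq α] {s : Finset α}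
    {P Q : Finpartition s} (h : P.parts = Q.parts) : P = Q := by
  cases P; cases Q; simpa using h

namespace Multigraph

variable (G : Multigraph)

open Classical in
/-- The partition of the vertices into colour classes of `f`. -/
noncomputable def fiberPart {t : ℕ} (f : G.V → Fin t) :
    Finpartition (Finset.univ : Finset G.V) :=
  Finpartition.ofSetoid (Setoid.ker f)

lemma mem_part_fiberPart {t : ℕ} (f : G.V → Fin t) (v w : G.V) :
    w ∈ (G.fiberPart f).part v ↔ f v = f w := by
  classical
  rw [fiberPart]
  exact (Finpartition.mem_part_ofSetoid_iff_rel).trans Setoid.ker_def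

lemma part_fiberPart_eq {t : ℕ} {f : G.V → Fin t}
    {π : Finpartition (Finset.univ : Finset G.V)} (hf : G.fiberPart f = π)
    {v w : G.V} (hw : w ∈ π.part v) : f v = f w := by
  rw [← hf] at hw
  exact (G.mem_part_fiberPart f v w).mp hw

/-- The number of colourings with colour-class partition `π` is a falling factorial. -/
lemma card_fiberPart_eq (t : ℕ) (π : Finpartition (Finset.univ : Finset G.V)) :
    Nat.card {f : G.V → Fin t // G.fiberPart f = π} = t.descFactorial π.parts.card := by
  classical
  have key : Function.Bijective
      (fun g : {g : π.parts → Fin t // Function.Injective g} =>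
        (⟨fun v => g.1 ⟨π.part v, π.part_mem.2 (Finset.mem_univ v)⟩, by
          apply Finpartition.ext'
          have hpart : ∀ v : G.V,
              (G.fiberPart (fun v => g.1 ⟨π.part v, π.part_mem.2 (Finset.mem_univ v)⟩)).part v
                = π.part v := by
            intro v
            ext w
            rw [G.mem_part_fiberPart]
            constructor
            · intro h
              have hpp : π.part v = π.part w := congrArg Subtype.val (g.2 h)
              exact (π.mem_part_iff_part_eq_part (Finset.mem_univ w)
                (Finset.mem_univ v)).mpr hpp.symm
            · intro hw
              have hpp : π.part w = π.part v :=
                (π.mem_part_iff_part_eq_part (Finset.mem_univ w) (Finset.mem_univ v)).mp hw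
              exact congrArg g.1 (Subtype.ext hpp.symm)
          -- parts equal
          ext B
          constructor
          · intro hB
            obtain ⟨x, hx⟩ := Finpartition.nonempty_of_mem_parts _ hB
            have := Finpartition.part_eq_of_mem _ hB hx
            rw [← this, hpart x]
            exact π.part_mem.2 (Finset.mem_univ x)
          · intro hB
            obtain ⟨x, hx⟩ := Finpartition.nonempty_of_mem_parts _ hB
            have := Finpartition.part_eq_of_mem _ hB hx
            rw [← this, ← hpart x]
            exact (Finpartition.part_mem _).2 (Finset.mem_univ x)⟩ :
          {f : G.V → Fin t // G.fiberPart f = π})) := by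
    constructor
    · rintro ⟨g, hg⟩ ⟨g', hg'⟩ h
      have h' := congrFun (congrArg Subtype.val h)
      apply Subtype.ext
      funext B
      obtain ⟨B, hB⟩ := B
      obtain ⟨x, hx⟩ := Finpartition.nonempty_of_mem_parts _ hB
      have hBx : π.part x = B := Finpartition.part_eq_of_mem _ hB hx
      have hx' := h' x
      simp only at hx'
      simpa [hBx] using hx'
    · rintro ⟨f, hf⟩
      have hrep : ∀ B : π.parts, (Finpartition.nonempty_of_mem_parts _ B.2).choose ∈ B.1 :=
        fun B => (Finpartition.nonempty_of_mem_parts _ B.2).choose_spec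
      set g : π.parts → Fin t := fun B => f (Finpartition.nonempty_of_mem_parts _ B.2).choose
        with hgdef
      have hginj : Function.Injective g := by
        rintro B B' hBB'
        have h1 := hrep B
        have h2 := hrep B'
        -- f rB = f rB'
        have hmem : (Finpartition.nonempty_of_mem_parts _ B'.2).choose ∈
            (G.fiberPart f).part (Finpartition.nonempty_of_mem_parts _ B.2).choose := by
          rw [G.mem_part_fiberPart]; exact hBB'
        rw [hf] at hmem
        have hpB : π.part (Finpartition.nonempty_of_mem_parts _ B.2).choose = B.1 :=
          Finpartition.part_eq_of_mem _ B.2 h1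
        rw [hpB] at hmem
        exact Subtype.ext (π.eq_of_mem_parts B.2 B'.2 hmem h2)
      refine ⟨⟨g, hginj⟩, ?_⟩
      apply Subtype.ext
      funext v
      simp only [hgdef]
      have hv : (Finpartition.nonempty_of_mem_parts _
          (π.part_mem.2 (Finset.mem_univ v))).choose ∈ π.part v :=
        hrep ⟨π.part v, π.part_mem.2 (Finset.mem_univ v)⟩
      exact (G.part_fiberPart_eq hf hv).symm
  rw [← Nat.card_eq_of_bijective _ key, Nat.card_eq_fintype_card,
    Fintype.card_congr (Equiv.subtypeInjectiveEquivEmbedding π.parts (Fin t)),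
    Fintype.card_embedding_eq, Fintype.card_coe, Fintype.card_fin]

lemma proper_iff_fiberPart (t : ℕ) (f : G.V → Fin t)
    (π : Finpartition (Finset.univ : Finset G.V)) (hf : G.fiberPart f = π) :
    (∀ e : G.E, ¬ ((G.ends e).map f).IsDiag) ↔ (∀ e : G.E, ¬ G.EdgeIn e π) := by
  constructor
  · intro hp e ⟨B, hB, hmem⟩
    obtain ⟨u, v, huv⟩ := Sym2.exists_eq' (G.ends e)
    have hu : u ∈ B := hmem u (by rw [huv]; exact Sym2.mem_mk_left u v)
    have hv : v ∈ B := hmem v (by rw [huv]; exact Sym2.mem_mk_right u v)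
    have hpu : π.part u = B := Finpartition.part_eq_of_mem _ hB hu
    have : f u = f v := G.part_fiberPart_eq hf (hpu ▸ hv)
    exact hp e (by rw [huv, Sym2.map_pair_eq, Sym2.mk_isDiag_iff]; exact this)
  · intro ha e hd
    obtain ⟨u, v, huv⟩ := Sym2.exists_eq' (G.ends e)
    rw [huv, Sym2.map_pair_eq, Sym2.mk_isDiag_iff] at hd
    refine ha e ⟨π.part u, π.part_mem.2 (Finset.mem_univ u), ?_⟩
    intro w hw
    rw [huv, Sym2.mem_iff] at hw
    rcases hw with rfl | rfl
    · exact π.mem_part (Finset.mem_univ w)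
    · rw [← hf, G.mem_part_fiberPart]; exact hd

end Multigraph

end Aux

/-- the coefficient of `q^m` in `Z_G(q,t)` is the number of proper
`t`-colourings of `G`, i.e. the chromatic polynomial of `G` evaluated at `t`. -/
theorem coeff_top_ZqPoly (G : Multigraph) (t : ℕ) :
    (G.ZqPoly t).coeff (Fintype.card G.E) =
      (Nat.card {f : G.V → Fin t // ∀ e : G.E, ¬ ((G.ends e).map f).IsDiag} : ℤ) := by
  classical
  set m := Fintype.card G.E with hm
  have hA : ∀ π : Finpartition (Finset.univ : Finset G.V),
      (m = G.crossCount π) ↔ ∀ e, ¬ G.EdgeIn e π := by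
    intro π
    show m = (Finset.univ.filter (fun e => ¬ G.EdgeIn e π)).card ↔ _
    constructor
    · intro h e
      have h2 : (Finset.univ.filter (fun e => ¬ G.EdgeIn e π)) = Finset.univ :=
        Finset.eq_univ_of_card _ h.symm
      have : e ∈ Finset.univ.filter (fun e => ¬ G.EdgeIn e π) := by
        rw [h2]; exact Finset.mem_univ e
      exact (Finset.mem_filter.mp this).2
    · intro h
      rw [Finset.filter_true_of_mem (fun e _ => h e), Finset.card_univ]
  -- LHS
  have hcoeff : (G.ZqPoly t).coeff m =
      ∑ π ∈ Finset.univ.filter (fun π : Finpartition (Finset.univ : Finset G.V) =>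
        ∀ e, ¬ G.EdgeIn e π), (t.descFactorial π.parts.card : ℤ) := by
    rw [Multigraph.ZqPoly, Polynomial.finset_sum_coeff]
    have hterm : ∀ π : Finpartition (Finset.univ : Finset G.V),
        ((Polynomial.X : Polynomial ℤ) ^ G.crossCount π *
          Polynomial.C (∏ j ∈ Finset.range π.parts.card, ((t : ℤ) - (j : ℤ)))).coeff m =
        if m = G.crossCount π then (t.descFactorial π.parts.card : ℤ) else 0 := by
      intro π
      rw [mul_comm, Polynomial.coeff_C_mul, Polynomial.coeff_X_pow,
        prod_range_cast_sub_descFactorial]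
      split <;> simp
    rw [Finset.sum_congr rfl (fun π _ => hterm π), ← Finset.sum_filter,
      Finset.filter_congr (fun π _ => hA π)]
  rw [hcoeff]
  -- RHS
  have hcardP : (Nat.card {f : G.V → Fin t // ∀ e : G.E, ¬ ((G.ends e).map f).IsDiag}) =
      (Finset.univ.filter
        (fun f : G.V → Fin t => ∀ e : G.E, ¬ ((G.ends e).map f).IsDiag)).card := by
    rw [Nat.card_eq_fintype_card, Fintype.card_subtype]
  have hfib : (Finset.univ.filter
        (fun f : G.V → Fin t => ∀ e : G.E, ¬ ((G.ends e).map f).IsDiag)).card =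
      ∑ π ∈ Finset.univ.filter (fun π : Finpartition (Finset.univ : Finset G.V) =>
        ∀ e, ¬ G.EdgeIn e π), t.descFactorial π.parts.card := by
    rw [Finset.card_eq_sum_card_fiberwise (f := G.fiberPart)
      (t := Finset.univ.filter (fun π : Finpartition (Finset.univ : Finset G.V) =>
        ∀ e, ¬ G.EdgeIn e π))
      (fun f hf => by
        rw [Finset.mem_coe, Finset.mem_filter] at hf ⊢
        exact ⟨Finset.mem_univ _,
          (G.proper_iff_fiberPart t f _ rfl).mp hf.2⟩)]
    refine Finset.sum_congr rfl fun π hπ => ?_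
    rw [Finset.mem_filter] at hπ
    have hset : (Finset.univ.filter
          (fun f : G.V → Fin t => ∀ e : G.E, ¬ ((G.ends e).map f).IsDiag)).filter
            (fun f => G.fiberPart f = π) =
        Finset.univ.filter (fun f : G.V → Fin t => G.fiberPart f = π) := by
      ext f
      simp only [Finset.mem_filter, Finset.mem_univ, true_and]
      refine ⟨fun h => h.2, fun h => ⟨?_, h⟩⟩
      exact (G.proper_iff_fiberPart t f π h).mpr hπ.2
    rw [hset, ← Fintype.card_subtype, ← Nat.card_eq_fintype_card, G.card_fiberPart_eq]
  rw [hcardP, hfib]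
  push_cast
  rfl
end

section
/- Let G be a finite graph, 0 ≤ q ≤ 1, and k ∈ ℕ. Form a random spanning subgraph 𝒢(q) of G by deleting each edge independently with probability q. Then the probability that 𝒢(q) has exactly k connected components equals Σ_{S⊆E : c((V,S))=k} (1−q)^{#S} q^{#E−#S}, and this equals the coefficient of t^k in Z_G(q,t). -/
open Finset

/-- `Z_G(q,t)` for a fixed real `q`, as a polynomial in `t` over `ℝ`. -/
noncomputable def Multigraph.ZtPoly (G : Multigraph) (q : ℝ) : Polynomial ℝ :=
  ∑ π : Finpartition (Finset.univ : Finset G.V),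
    Polynomial.C (q ^ G.crossCount π) *
      ∏ j ∈ Finset.range π.parts.card, (Polynomial.X - Polynomial.C (j : ℝ))

section FK

open Polynomial Finset

/-- Two finpartitions of `univ` with the same part function are equal. -/
lemma finpartition_eq_of_part_eq {α : Type*} [Fintype α] [DecidableEq α]
    {P Q : Finpartition (univ : Finset α)} (h : ∀ a, P.part a = Q.part a) : P = Q := by
  have key : ∀ R : Finpartition (univ : Finset α), R.parts = univ.image R.part := by
    intro R
    ext B
    simp only [mem_image, mem_univ, true_and]
    constructor
    · intro hB
      obtain ⟨x, hx⟩ := R.nonempty_of_mem_parts hB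
      exact ⟨x, R.part_eq_of_mem hB hx⟩
    · rintro ⟨a, rfl⟩
      exact R.part_mem.2 (mem_univ a)
  have hparts : P.parts = Q.parts := by
    rw [key P, key Q]
    exact Finset.image_congr fun a _ => h a
  cases P; cases Q
  simpa using hparts

lemma prod_cast_sub_range (n b : ℕ) :
    ∏ j ∈ Finset.range b, ((n : ℝ) - (j : ℝ)) = (n.descFactorial b : ℝ) := by
  rcases le_or_gt b n with h | h
  · rw [Nat.descFactorial_eq_prod_range, Nat.cast_prod]
    refine Finset.prod_congr rfl fun j hj => ?_
    rw [Finset.mem_range] at hj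
    rw [Nat.cast_sub (le_of_lt (lt_of_lt_of_le hj h))]
  · rw [Nat.descFactorial_eq_zero_iff_lt.2 h, Nat.cast_zero]
    exact Finset.prod_eq_zero (Finset.mem_range.2 h) (by simp)

namespace Multigraph

variable (G : Multigraph)

/-- An edge is monochromatic under a colouring `σ`. -/
def Mono {n : ℕ} (σ : G.V → Fin n) (e : G.E) : Prop :=
  ∀ v ∈ G.ends e, ∀ w ∈ G.ends e, σ v = σ w

open Classical in
lemma card_allMono (n : ℕ) (S : Finset G.E) :
    Fintype.card {σ : G.V → Fin n // ∀ e ∈ S, G.Mono σ e} = n ^ G.compCount S := by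
  classical
  set r := fun v w : G.V => ∃ f ∈ S, v ∈ G.ends f ∧ w ∈ G.ends f with hr
  have key : ∀ (σ : G.V → Fin n), (∀ e ∈ S, G.Mono σ e) →
      ∀ v w, Relation.EqvGen r v w → σ v = σ w := by
    intro σ hσ v w h
    induction h with
    | rel a b hab =>
      obtain ⟨f, hf, ha, hb⟩ := hab
      exact hσ f hf a ha b hb
    | refl => rfl
    | symm a b _ ih => exact ih.symm
    | trans a b c _ _ ih1 ih2 => exact ih1.trans ih2
  have e1 : {σ : G.V → Fin n // ∀ e ∈ S, G.Mono σ e} ≃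
      (Quotient (Relation.EqvGen.setoid r) → Fin n) :=
    { toFun := fun σ => Quotient.lift σ.1 (fun v w h => key σ.1 σ.2 v w h)
      invFun := fun g => ⟨fun v => g (Quotient.mk _ v), by
        intro e he v hv w hw
        have hq : Quotient.mk (Relation.EqvGen.setoid r) v =
            Quotient.mk (Relation.EqvGen.setoid r) w :=
          Quotient.sound (Relation.EqvGen.rel _ _ ⟨e, he, hv, hw⟩)
        simp only [hq]⟩
      left_inv := fun σ => by ext v; rfl
      right_inv := fun g => by
        funext x
        induction x using Quotient.inductionOn with
        | h a => rfl }
  rw [Fintype.card_congr e1, Fintype.card_fun, Fintype.card_fin]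
  rw [Multigraph.compCount, Nat.card_eq_fintype_card]

open Classical in
/-- The kernel partition of a colouring. -/
noncomputable def toPart {n : ℕ} (σ : G.V → Fin n) : Finpartition (univ : Finset G.V) :=
  Finpartition.ofSetoid (Setoid.ker σ)

open Classical in
lemma mem_part_toPart {n : ℕ} (σ : G.V → Fin n) (a b : G.V) :
    b ∈ (G.toPart σ).part a ↔ σ a = σ b :=
  Finpartition.mem_part_ofSetoid_iff_rel

open Classical in
lemma part_toPart_eq_iff {n : ℕ} (σ : G.V → Fin n) (a b : G.V) :
    (G.toPart σ).part a = (G.toPart σ).part b ↔ σ a = σ b := by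
  rw [← (G.toPart σ).mem_part_iff_part_eq_part (mem_univ a) (mem_univ b),
    mem_part_toPart, eq_comm]

open Classical in
lemma toPart_eq_iff {n : ℕ} (σ : G.V → Fin n) (π : Finpartition (univ : Finset G.V)) :
    G.toPart σ = π ↔ ∀ a b, σ a = σ b ↔ π.part a = π.part b := by
  constructor
  · rintro rfl a b
    exact (G.part_toPart_eq_iff σ a b).symm
  · intro h
    refine finpartition_eq_of_part_eq fun a => ?_
    ext b
    rw [mem_part_toPart, h a b,
      π.mem_part_iff_part_eq_part (mem_univ b) (mem_univ a)]
    exact eq_comm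

open Classical in
lemma mono_iff_edgeIn {n : ℕ} {σ : G.V → Fin n} {π : Finpartition (univ : Finset G.V)}
    (h : G.toPart σ = π) (e : G.E) : G.Mono σ e ↔ G.EdgeIn e π := by
  rw [toPart_eq_iff] at h
  have hmem : ∃ a, a ∈ G.ends e := by
    induction G.ends e using Sym2.ind with
    | _ x y => exact ⟨x, Sym2.mem_mk_left x y⟩
  obtain ⟨a, ha⟩ := hmem
  constructor
  · intro hm
    refine ⟨π.part a, π.part_mem.2 (mem_univ a), fun v hv => ?_⟩
    rw [π.mem_part_iff_part_eq_part (mem_univ v) (mem_univ a)]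
    exact (h v a).1 (hm v hv a ha)
  · rintro ⟨B, hB, hall⟩ v hv w hw
    refine (h v w).2 ?_
    rw [π.part_eq_of_mem hB (hall v hv), π.part_eq_of_mem hB (hall w hw)]

open Classical in
lemma card_fiber (n : ℕ) (π : Finpartition (univ : Finset G.V)) :
    Fintype.card {σ : G.V → Fin n // G.toPart σ = π} =
      n.descFactorial π.parts.card := by
  classical
  have hx : ∀ B : {B // B ∈ π.parts}, (π.nonempty_of_mem_parts B.2).choose ∈ B.1 :=
    fun B => (π.nonempty_of_mem_parts B.2).choose_spec
  have e : {σ : G.V → Fin n // G.toPart σ = π} ≃ ({B // B ∈ π.parts} ↪ Fin n) :=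
    { toFun := fun σ =>
        ⟨fun B => σ.1 (π.nonempty_of_mem_parts B.2).choose, by
          intro B B' hBB'
          have h := (G.toPart_eq_iff σ.1 π).1 σ.2
          have hp := (h _ _).1 hBB'
          rw [π.part_eq_of_mem B.2 (hx B), π.part_eq_of_mem B'.2 (hx B')] at hp
          exact Subtype.ext hp⟩
      invFun := fun g =>
        ⟨fun v => g ⟨π.part v, π.part_mem.2 (mem_univ v)⟩, by
          rw [toPart_eq_iff]
          intro a b
          constructor
          · intro hab
            exact congrArg Subtype.val (g.injective hab)
          · intro hab
            congr 1
            exact Subtype.ext hab⟩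
      left_inv := by
        rintro ⟨σ, hσ⟩
        have h := (G.toPart_eq_iff σ π).1 hσ
        refine Subtype.ext (funext fun v => ?_)
        show σ _ = σ v
        refine (h _ v).2 ?_
        exact π.part_eq_of_mem (π.part_mem.2 (mem_univ v))
          (hx ⟨π.part v, π.part_mem.2 (mem_univ v)⟩)
      right_inv := by
        intro g
        refine Function.Embedding.ext fun B => ?_
        show g _ = g B
        congr 1
        exact Subtype.ext (π.part_eq_of_mem B.2 (hx B)) }
  rw [Fintype.card_congr e, Fintype.card_embedding_eq, Fintype.card_fin]
  congr 1
  exact Fintype.card_coe _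

open Classical in
lemma sum_colorings_eq_eval (n : ℕ) (q : ℝ) :
    ∑ σ : G.V → Fin n, ∏ e : G.E, (if G.Mono σ e then (1 : ℝ) else q) =
      (G.ZtPoly q).eval (n : ℝ) := by
  classical
  rw [ZtPoly, eval_finset_sum]
  have hR : ∀ π : Finpartition (univ : Finset G.V),
      (C (q ^ G.crossCount π) *
        ∏ j ∈ Finset.range π.parts.card, (X - C (j : ℝ))).eval (n : ℝ) =
      q ^ G.crossCount π * (n.descFactorial π.parts.card : ℝ) := by
    intro π
    rw [eval_mul, eval_C, eval_prod]
    simp only [eval_sub, eval_X, eval_C]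
    rw [prod_cast_sub_range]
  rw [Finset.sum_congr rfl fun π _ => hR π]
  rw [← Finset.sum_fiberwise univ (fun σ : G.V → Fin n => G.toPart σ)
    (fun σ => ∏ e : G.E, (if G.Mono σ e then (1 : ℝ) else q))]
  refine Finset.sum_congr rfl fun π _ => ?_
  have hval : ∀ σ ∈ univ.filter (fun σ : G.V → Fin n => G.toPart σ = π),
      ∏ e : G.E, (if G.Mono σ e then (1 : ℝ) else q) = q ^ G.crossCount π := by
    intro σ hσ
    rw [Finset.mem_filter] at hσ
    have hme := G.mono_iff_edgeIn hσ.2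
    have h1 : ∏ e : G.E, (if G.Mono σ e then (1 : ℝ) else q) =
        ∏ e : G.E, (if G.EdgeIn e π then (1 : ℝ) else q) :=
      Finset.prod_congr rfl fun e _ => by rw [if_congr (hme e) rfl rfl]
    rw [h1, Finset.prod_ite, Finset.prod_const_one, one_mul, Finset.prod_const,
      Multigraph.crossCount]
  rw [Finset.sum_congr rfl hval, Finset.sum_const, nsmul_eq_mul]
  rw [← Fintype.card_subtype, card_fiber]
  ring

open Classical in
lemma sum_colorings_eq_sum_subsets (n : ℕ) (q : ℝ) :
    ∑ σ : G.V → Fin n, ∏ e : G.E, (if G.Mono σ e then (1 : ℝ) else q) =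
      ∑ S ∈ (univ : Finset G.E).powerset,
        (1 - q) ^ S.card * q ^ (Fintype.card G.E - S.card) * (n : ℝ) ^ G.compCount S := by
  classical
  have hsplit : ∀ σ : G.V → Fin n,
      ∏ e : G.E, (if G.Mono σ e then (1 : ℝ) else q) =
      ∑ S ∈ (univ : Finset G.E).powerset,
        (if ∀ e ∈ S, G.Mono σ e then ((1 : ℝ) - q) ^ S.card else 0) *
          q ^ (Fintype.card G.E - S.card) := by
    intro σ
    have hfac : ∀ e : G.E, (if G.Mono σ e then (1 : ℝ) else q) =
        (if G.Mono σ e then (1 : ℝ) - q else 0) + q := by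
      intro e
      by_cases h : G.Mono σ e <;> simp [h]
    rw [Finset.prod_congr rfl fun e _ => hfac e, Finset.prod_add]
    refine Finset.sum_congr rfl fun S hS => ?_
    rw [Finset.mem_powerset] at hS
    congr 1
    · by_cases h : ∀ e ∈ S, G.Mono σ e
      · rw [if_pos h, Finset.prod_congr rfl fun e he => if_pos (h e he),
          Finset.prod_const]
      · rw [if_neg h]
        push_neg at h
        obtain ⟨e, he, hne⟩ := h
        exact Finset.prod_eq_zero he (if_neg hne)
    · rw [Finset.prod_const, Finset.card_sdiff_of_subset hS, Finset.card_univ]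
  rw [Finset.sum_congr rfl fun σ _ => hsplit σ, Finset.sum_comm]
  refine Finset.sum_congr rfl fun S _ => ?_
  rw [← Finset.sum_mul, Finset.sum_ite, Finset.sum_const, Finset.sum_const_zero,
    add_zero, nsmul_eq_mul, ← Fintype.card_subtype, card_allMono]
  push_cast
  ring

end Multigraph

end FK

open Classical in
/-- for `0 ≤ q ≤ 1`, the probability that the random subgraph `𝒢(q)`
has exactly `k` connected components equals `Σ_{S : c((V,S))=k} (1-q)^{#S} q^{#E-#S}`,
which equals the coefficient of `t^k` in `Z_G(q,t)`. -/
theorem reliability_eq_coeff_ZtPoly (G : Multigraph) (q : ℝ) (hq0 : 0 ≤ q) (hq1 : q ≤ 1)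
    (k : ℕ) :
    ∑ S ∈ Finset.univ.powerset.filter (fun S : Finset G.E => G.compCount S = k),
        (1 - q) ^ S.card * q ^ (Fintype.card G.E - S.card) =
      (G.ZtPoly q).coeff k := by
  classical
  set P : Polynomial ℝ := ∑ S ∈ (Finset.univ : Finset G.E).powerset,
      Polynomial.C ((1 - q) ^ S.card * q ^ (Fintype.card G.E - S.card)) *
        Polynomial.X ^ G.compCount S with hP
  have hcoeff : P.coeff k =
      ∑ S ∈ Finset.univ.powerset.filter (fun S : Finset G.E => G.compCount S = k),
        (1 - q) ^ S.card * q ^ (Fintype.card G.E - S.card) := by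
    rw [hP, Polynomial.finset_sum_coeff, Finset.sum_filter]
    refine Finset.sum_congr rfl fun S _ => ?_
    rw [Polynomial.coeff_C_mul, Polynomial.coeff_X_pow]
    by_cases h : G.compCount S = k
    · rw [if_pos h.symm, mul_one, if_pos h]
    · rw [if_neg fun hk => h hk.symm, mul_zero, if_neg h]
  have heval : ∀ n : ℕ, P.eval (n : ℝ) = (G.ZtPoly q).eval (n : ℝ) := by
    intro n
    rw [← G.sum_colorings_eq_eval n q, G.sum_colorings_eq_sum_subsets n q, hP,
      Polynomial.eval_finset_sum]
    refine Finset.sum_congr rfl fun S _ => ?_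
    simp
  have hPZ : P = G.ZtPoly q := by
    have h0 : P - G.ZtPoly q = 0 := by
      refine Polynomial.eq_zero_of_infinite_isRoot _ ?_
      refine Set.Infinite.mono ?_
        (Set.infinite_range_of_injective (Nat.cast_injective (R := ℝ)))
      rintro x ⟨n, rfl⟩
      simp [Polynomial.IsRoot, heval n]
    exact sub_eq_zero.mp h0
  rw [← hcoeff, hPZ]
end

section
/- For any finite matroid M = (E,ρ), the two-variable function Y_M(q,t) := (1−q)^{ρ(E)} q^{σ(E)} T_M((qt+1−q)/(1−q), 1/q) is a polynomial in q and t with integer coefficients; moreover its degree in t equals ρ(E) and its degree in q equals the number of non-loop elements of M. -/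
open Finset

/-- A matroid on a finite ground set, presented by its (Whitney) rank function:
normalized, monotone, and submodular. -/
structure FinMatroid (α : Type*) [DecidableEq α] [Fintype α] where
  rk : Finset α → ℕ
  rk_le_card : ∀ S, rk S ≤ S.card
  rk_mono : ∀ ⦃S T : Finset α⦄, S ⊆ T → rk S ≤ rk T
  rk_submod : ∀ S T : Finset α, rk (S ∪ T) + rk (S ∩ T) ≤ rk S + rk T

namespace FinMatroid

variable {α : Type*} [DecidableEq α] [Fintype α]

/-- The rank `ρ(E)` of the matroid. -/
def rank (M : FinMatroid α) : ℕ := M.rk Finset.univ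

lemma rk_empty (M : FinMatroid α) : M.rk ∅ = 0 :=
  Nat.le_zero.mp (by simpa using M.rk_le_card ∅)

lemma rk_le_rank (M : FinMatroid α) (S : Finset α) : M.rk S ≤ M.rank :=
  M.rk_mono (Finset.subset_univ S)

/-- A loop is an element of rank zero. -/
def IsLoop (M : FinMatroid α) (e : α) : Prop := M.rk {e} = 0

/-- A coloop: deleting it lowers the rank. -/
def IsColoop (M : FinMatroid α) (e : α) : Prop :=
  M.rk (Finset.univ.erase e) + 1 = M.rank

/-- A link is an element which is neither a loop nor a coloop. -/
def IsLink (M : FinMatroid α) (e : α) : Prop := ¬ M.IsLoop e ∧ ¬ M.IsColoop e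

/-- The embedding of the ground set with `e` removed. -/
def emb (e : α) : {x : α // x ≠ e} ↪ α := Function.Embedding.subtype _

lemma e_not_mem_map (e : α) (S : Finset {x : α // x ≠ e}) : e ∉ S.map (emb e) := by
  simp [emb]

/-- Deletion `M ∖ e` of an element. -/
def delete (M : FinMatroid α) (e : α) : FinMatroid {x : α // x ≠ e} where
  rk S := M.rk (S.map (emb e))
  rk_le_card S := by simpa using M.rk_le_card (S.map (emb e))
  rk_mono S T h := M.rk_mono (Finset.map_subset_map.mpr h)
  rk_submod S T := by
    have := M.rk_submod (S.map (emb e)) (T.map (emb e))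
    rwa [← Finset.map_union, ← Finset.map_inter] at this

/-- Contraction `M / e` of an element. -/
def contract (M : FinMatroid α) (e : α) : FinMatroid {x : α // x ≠ e} where
  rk S := M.rk (insert e (S.map (emb e))) - M.rk {e}
  rk_le_card S := by
    try dsimp only
    have h1 : M.rk (insert e (S.map (emb e))) ≤ M.rk (S.map (emb e)) + M.rk {e} := by
      have := M.rk_submod (S.map (emb e)) {e}
      have hie : S.map (emb e) ∩ {e} = ∅ := by
        simp [Finset.eq_empty_iff_forall_notMem, emb]
      rw [Finset.union_comm] at this
      rw [← Finset.insert_eq, hie, M.rk_empty] at this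
      omega
    have h2 := M.rk_le_card (S.map (emb e))
    simp only [Finset.card_map] at h2
    omega
  rk_mono S T h := by
    try dsimp only
    have := M.rk_mono (Finset.insert_subset_insert e ((Finset.map_subset_map (f := emb e)).mpr h))
    omega
  rk_submod S T := by
    try dsimp only
    have key := M.rk_submod (insert e (S.map (emb e))) (insert e (T.map (emb e)))
    have hU : insert e (S.map (emb e)) ∪ insert e (T.map (emb e))
        = insert e ((S ∪ T).map (emb e)) := by
      rw [Finset.map_union]; ext x
      simp only [Finset.mem_union, Finset.mem_insert]; tauto
    have hI : insert e (S.map (emb e)) ∩ insert e (T.map (emb e))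
        = insert e ((S ∩ T).map (emb e)) := by
      rw [Finset.map_inter]; ext x
      simp only [Finset.mem_inter, Finset.mem_insert]; tauto
    rw [hU, hI] at key
    have l1 : M.rk {e} ≤ M.rk (insert e ((S ∪ T).map (emb e))) :=
      M.rk_mono (by simp)
    have l2 : M.rk {e} ≤ M.rk (insert e ((S ∩ T).map (emb e))) :=
      M.rk_mono (by simp)
    have l3 : M.rk {e} ≤ M.rk (insert e (S.map (emb e))) := M.rk_mono (by simp)
    have l4 : M.rk {e} ≤ M.rk (insert e (T.map (emb e))) := M.rk_mono (by simp)
    omega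

/-- The Tutte polynomial
`T_M(x,y) = Σ_{S ⊆ E} (x-1)^{ρ(E)-ρ(S)} (y-1)^{#S-ρ(S)}`, evaluated in a
commutative ring. -/
def tutte (M : FinMatroid α) {R : Type*} [CommRing R] (x y : R) : R :=
  ∑ S : Finset α, (x - 1) ^ (M.rank - M.rk S) * (y - 1) ^ (S.card - M.rk S)

/-- The specialization `Y_M(q,t) = (1-q)^{ρ(E)} q^{σ(E)} T_M((qt+1-q)/(1-q), 1/q)`. -/
noncomputable def Y (M : FinMatroid α) {K : Type*} [Field K] (q t : K) : K :=
  (1 - q) ^ M.rank * q ^ (Fintype.card α - M.rank) *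
    M.tutte ((q * t + 1 - q) / (1 - q)) (1 / q)

open Classical in
/-- The Möbius function `μ(0̂, S)` of the poset obtained from the finsets satisfying `P`
(ordered by inclusion) by adjoining a bottom element `0̂`; by convention `μ(0̂,S) = 0`
for sets not satisfying `P`. -/
noncomputable def mob (P : Finset α → Prop) : Finset α → ℤ := fun S =>
  if P S then -1 - ∑ T ∈ (S.powerset.erase S).attach, mob P T.1 else 0
termination_by S => S.card
decreasing_by
  have hT := T.2
  simp only [Finset.mem_erase, Finset.mem_powerset] at hT
  exact Finset.card_lt_card (HasSubset.Subset.ssubset_of_ne hT.2 hT.1)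

/-- Membership in `𝒮ᵢ^M = {S ⊆ E : ρ(S) ≥ d - i}` (with `i : ℤ`). -/
def Smem (M : FinMatroid α) (i : ℤ) (S : Finset α) : Prop :=
  (M.rank : ℤ) - i ≤ (M.rk S : ℤ)

/-- The Möbius function `μᵢ^M(S) = μ(0̂, S)` of the lattice `ℒᵢ^M = {0̂} ⊕ 𝒮ᵢ^M`. -/
noncomputable def mu (M : FinMatroid α) (i : ℤ) : Finset α → ℤ := mob (M.Smem i)

/-- `W_i^M(p) = Σ_{S ∈ 𝒮ᵢ^M} μᵢ^M(S) (-p)^{#S-d+1+i}`, evaluated in a commutative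
ring.  (Terms with `S ∉ 𝒮ᵢ^M` vanish since `μᵢ^M` is zero there.) -/
noncomputable def W (M : FinMatroid α) (i : ℤ) {R : Type*} [CommRing R] (p : R) : R :=
  ∑ S : Finset α, (M.mu i S : R) * (-p) ^ (((S.card : ℤ) - M.rank + 1 + i).toNat)

end FinMatroid


namespace FinMatroid

variable {α : Type*} [DecidableEq α] [Fintype α]

lemma rk_of_loops (M : FinMatroid α) {B : Finset α} (hB : ∀ b ∈ B, M.IsLoop b) :
    M.rk B = 0 := by
  classical
  induction B using Finset.induction_on with
  | empty => exact M.rk_empty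
  | @insert a s ha ih =>
    have h1 := M.rk_submod {a} s
    have h2 : M.rk {a} = 0 := hB a (Finset.mem_insert_self a s)
    have h3 : M.rk s = 0 := ih fun b hb => hB b (Finset.mem_insert_of_mem hb)
    have h4 : insert a s = {a} ∪ s := by rw [Finset.insert_eq]
    rw [h4]
    omega

lemma rk_union_loops (M : FinMatroid α) (A : Finset α) {B : Finset α}
    (hB : ∀ b ∈ B, M.IsLoop b) : M.rk (A ∪ B) = M.rk A := by
  have h1 := M.rk_submod A B
  have h2 := M.rk_of_loops hB
  have h3 : M.rk A ≤ M.rk (A ∪ B) := M.rk_mono Finset.subset_union_left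
  omega

end FinMatroid

section AuxPoly

open MvPolynomial

lemma Yaux_key (q t : ℚ) (hq : q ≠ 0) (h1 : (1:ℚ) - q ≠ 0) {n r s c : ℕ}
    (hcr : c ≤ r) (hcs : c ≤ s) (hsn : s ≤ n) (hrn : r ≤ n) :
    (1-q)^r * q^(n-r) * ((q*t/(1-q))^(r-c) * ((1-q)/q)^(s-c))
      = q^(n-s) * ((1-q)^s * t^(r-c)) := by
  have hA : (q:ℚ)^(n-r) * q^(r-c) = q^(n-s) * q^(s-c) := by
    rw [← pow_add, ← pow_add]; congr 1; omega
  have hB : ((1:ℚ)-q)^r * (1-q)^(s-c) = (1-q)^s * (1-q)^(r-c) := by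
    rw [← pow_add, ← pow_add]; congr 1; omega
  rw [div_pow, div_pow, mul_pow]
  field_simp
  linear_combination (t^(r-c) * (1-q)^r * (1-q)^(s-c)) * hA
    + (t^(r-c) * q^(n-s) * q^(s-c)) * hB

lemma Yaux_vars (a b : ℕ) : ((X 0 : MvPolynomial (Fin 2) ℤ)^a * (1 - X 0)^b).vars ⊆ {0} := by
  refine (vars_mul _ _).trans
    (Finset.union_subset ((vars_pow _ _).trans ?_) ((vars_pow _ _).trans ?_))
  · rw [vars_X]
  · refine (vars_sub_subset _).trans ?_
    rw [vars_X, vars_one]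
    simp

lemma Yaux_coeff_zero {p : MvPolynomial (Fin 2) ℤ} (h : p.vars ⊆ {0}) {d : Fin 2 →₀ ℕ}
    (hd : d 1 ≠ 0) : coeff d p = 0 := by
  by_contra hc
  have h1 : (1 : Fin 2) ∈ p.vars :=
    (mem_vars _).mpr ⟨d, mem_support_iff.mpr hc, Finsupp.mem_support_iff.mpr hd⟩
  have := h h1
  simp at this

lemma Yaux_deg1 (p : MvPolynomial (Fin 2) ℤ) (h : p.vars ⊆ {0}) : p.degreeOf 1 = 0 := by
  rw [degreeOf_eq_sup]
  refine Nat.le_zero.mp (Finset.sup_le fun d hd => ?_)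
  by_contra hc
  have h1 : (1 : Fin 2) ∈ p.vars :=
    (mem_vars _).mpr ⟨d, hd, Finsupp.mem_support_iff.mpr (by omega)⟩
  have := h h1; simp at this

lemma Yaux_deg0_sub : ((1 : MvPolynomial (Fin 2) ℤ) - X 0).degreeOf 0 ≤ 1 := by
  refine (degreeOf_sub_le _ _ _).trans ?_
  rw [show (1 : MvPolynomial (Fin 2) ℤ) = C 1 by simp, degreeOf_C]
  simp [degreeOf_X]

end AuxPoly

open Classical in
/-- `Y_M(q,t)` is a polynomial in `q` and `t` with integer coefficients
(variable `0` is `q`, variable `1` is `t`); its degree in `t` is `ρ(E)` and its degree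
in `q` is the number of non-loop elements of `M`. -/
theorem Y_is_polynomial {α : Type*} [DecidableEq α] [Fintype α] (M : FinMatroid α) :
    ∃ P : MvPolynomial (Fin 2) ℤ,
      (∀ q t : ℚ, q ≠ 0 → q ≠ 1 → (MvPolynomial.aeval ![q, t]) P = M.Y q t) ∧
      P.degreeOf 1 = M.rank ∧
      P.degreeOf 0 = (Finset.univ.filter (fun e => ¬ M.IsLoop e)).card := by
  classical
  set NL : Finset α := Finset.univ.filter (fun e => ¬ M.IsLoop e) with hNLdef
  set L : Finset α := Finset.univ.filter (fun e => M.IsLoop e) with hLdef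
  have hmemNL : ∀ e, e ∈ NL ↔ ¬ M.IsLoop e := by
    intro e; rw [hNLdef]; simp
  have hmemL : ∀ e, e ∈ L ↔ M.IsLoop e := by
    intro e; rw [hLdef]; simp
  have hnm : NL.card + L.card = Fintype.card α := by
    classical
    have h := Finset.card_filter_add_card_filter_not
      (s := (Finset.univ : Finset α)) (p := fun e => M.IsLoop e)
    rw [hNLdef, hLdef]
    rw [add_comm]
    convert h using 3
    exact Finset.card_univ.symm
  have hrn : M.rank ≤ Fintype.card α := by
    have := M.rk_le_card Finset.univ
    simpa [FinMatroid.rank] using this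
  set P : MvPolynomial (Fin 2) ℤ :=
    ∑ A ∈ NL.powerset, (MvPolynomial.X 0) ^ (NL.card - A.card) *
      (1 - MvPolynomial.X 0) ^ A.card * (MvPolynomial.X 1) ^ (M.rank - M.rk A) with hPdef
  -- rank of nonempty subsets of non-loops is positive
  have hrkpos : ∀ A ∈ NL.powerset, A ≠ ∅ → 1 ≤ M.rk A := by
    intro A hA hAne
    obtain ⟨a, ha⟩ := Finset.nonempty_iff_ne_empty.mpr hAne
    have haNL : a ∈ NL := (Finset.mem_powerset.mp hA) ha
    have hnl : ¬ M.IsLoop a := (hmemNL a).mp haNL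
    have h1 : M.rk {a} ≤ M.rk A := M.rk_mono (Finset.singleton_subset_iff.mpr ha)
    have h2 : M.rk {a} ≠ 0 := hnl
    omega
  -- the key coefficient computation
  set d : Fin 2 →₀ ℕ := Finsupp.single 0 NL.card + Finsupp.single 1 M.rank with hddef
  have hd0 : d 0 = NL.card := by rw [hddef]; simp
  have hd1 : d 1 = M.rank := by rw [hddef]; simp
  have hco : MvPolynomial.coeff d P = 1 := by
    rw [hPdef, MvPolynomial.coeff_sum]
    rw [Finset.sum_eq_single ∅]
    · rw [Finset.card_empty, Nat.sub_zero, M.rk_empty, Nat.sub_zero, pow_zero, mul_one,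
        MvPolynomial.X_pow_eq_monomial, MvPolynomial.X_pow_eq_monomial,
        MvPolynomial.monomial_mul, MvPolynomial.coeff_monomial]
      rw [if_pos hddef.symm]
      norm_num
    · intro A hA hAne
      have hrkA := hrkpos A hA hAne
      have hrkAr := M.rk_le_rank A
      set k := M.rank - M.rk A with hk
      have hkr : k < M.rank := by omega
      rw [show (MvPolynomial.X 1 : MvPolynomial (Fin 2) ℤ) ^ k
          = MvPolynomial.monomial (Finsupp.single 1 k) 1 from
          MvPolynomial.X_pow_eq_monomial, MvPolynomial.coeff_mul_monomial']
      rw [if_pos (Finsupp.single_le_iff.mpr (by omega : k ≤ d 1))]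
      rw [mul_one]
      refine Yaux_coeff_zero (Yaux_vars _ _) ?_
      rw [Finsupp.tsub_apply, hd1]
      simp only [Finsupp.single_eq_same]
      omega
    · intro h
      exact absurd (Finset.empty_mem_powerset _) h
  have hdP : d ∈ P.support := MvPolynomial.mem_support_iff.mpr (by rw [hco]; norm_num)
  refine ⟨P, ?_, ?_, ?_⟩
  · -- evaluation
    intro q t hq0 hq1
    have h1q : (1:ℚ) - q ≠ 0 := sub_ne_zero_of_ne (Ne.symm hq1)
    have haev : (MvPolynomial.aeval ![q, t]) P
        = ∑ A ∈ NL.powerset, q ^ (NL.card - A.card) *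
            ((1 - q) ^ A.card * t ^ (M.rank - M.rk A)) := by
      rw [hPdef, map_sum]
      refine Finset.sum_congr rfl fun A _ => ?_
      simp only [map_mul, map_pow, map_sub, map_one, MvPolynomial.aeval_X,
        Matrix.cons_val_zero, Matrix.cons_val_one, Matrix.head_cons]
      ring
    rw [haev]
    simp only [FinMatroid.Y, FinMatroid.tutte]
    have hx : (q*t+1-q)/(1-q) - 1 = q*t/(1-q) := by
      field_simp
      ring
    have hy : 1/q - 1 = (1-q)/q := by
      field_simp
    rw [hx, hy, Finset.mul_sum]
    have hterm : ∀ S : Finset α,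
        (1 - q) ^ M.rank * q ^ (Fintype.card α - M.rank) *
          ((q * t / (1 - q)) ^ (M.rank - M.rk S) * ((1 - q) / q) ^ (S.card - M.rk S))
        = q ^ (Fintype.card α - S.card) * ((1 - q) ^ S.card * t ^ (M.rank - M.rk S)) := by
      intro S
      exact Yaux_key q t hq0 h1q (M.rk_le_rank S) (M.rk_le_card S)
        (by simpa using Finset.card_le_card (Finset.subset_univ S)) hrn
    rw [Finset.sum_congr rfl fun S _ => hterm S]
    -- now reduce the full sum to the sum over subsets of non-loops
    have hdisj : Disjoint NL L := by
      rw [Finset.disjoint_left]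
      intro a haNL haL
      exact ((hmemNL a).mp haNL) ((hmemL a).mp haL)
    have hUnion : NL ∪ L = Finset.univ := by
      ext e
      by_cases h : M.IsLoop e <;> simp [hmemNL, hmemL, h]
    set f : Finset α → ℚ := fun S =>
      q ^ (Fintype.card α - S.card) * ((1 - q) ^ S.card * t ^ (M.rank - M.rk S)) with hfdef
    have step1 : ∑ S : Finset α, f S = ∑ p ∈ NL.powerset ×ˢ L.powerset, f (p.1 ∪ p.2) := by
      refine Finset.sum_nbij' (i := fun S => (S ∩ NL, S ∩ L)) (j := fun p => p.1 ∪ p.2)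
        ?_ ?_ ?_ ?_ ?_
      · intro S _
        rw [Finset.mem_product]
        exact ⟨Finset.mem_powerset.mpr Finset.inter_subset_right,
          Finset.mem_powerset.mpr Finset.inter_subset_right⟩
      · intro p _
        exact Finset.mem_univ _
      · intro S _
        show S ∩ NL ∪ S ∩ L = S
        rw [← Finset.inter_union_distrib_left, hUnion, Finset.inter_univ]
      · intro p hp
        rw [Finset.mem_product] at hp
        have hA : p.1 ⊆ NL := Finset.mem_powerset.mp hp.1
        have hB : p.2 ⊆ L := Finset.mem_powerset.mp hp.2
        have e1 : (p.1 ∪ p.2) ∩ NL = p.1 := by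
          ext a
          simp only [Finset.mem_inter, Finset.mem_union]
          constructor
          · rintro ⟨h1 | h2, hNLa⟩
            · exact h1
            · exact absurd hNLa (Finset.disjoint_right.mp hdisj (hB h2))
          · intro h
            exact ⟨Or.inl h, hA h⟩
        have e2 : (p.1 ∪ p.2) ∩ L = p.2 := by
          ext a
          simp only [Finset.mem_inter, Finset.mem_union]
          constructor
          · rintro ⟨h1 | h2, hLa⟩
            · exact absurd hLa (Finset.disjoint_left.mp hdisj (hA h1))
            · exact h2
          · intro h
            exact ⟨Or.inr h, hB h⟩
        show ((p.1 ∪ p.2) ∩ NL, (p.1 ∪ p.2) ∩ L) = p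
        rw [e1, e2]
      · intro S _
        show f S = f (S ∩ NL ∪ S ∩ L)
        rw [← Finset.inter_union_distrib_left, hUnion, Finset.inter_univ]
    rw [step1, Finset.sum_product]
    have hbin : ∑ B ∈ L.powerset, q ^ (L.card - B.card) * (1 - q) ^ B.card = 1 := by
      have hc : ∀ B ∈ L.powerset, q ^ (L.card - B.card) * (1 - q) ^ B.card
          = (∏ _x ∈ B, (1 - q)) * ∏ _x ∈ L \ B, q := by
        intro B hB
        rw [Finset.prod_const, Finset.prod_const,
          Finset.card_sdiff_of_subset (Finset.mem_powerset.mp hB)]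
        ring
      rw [Finset.sum_congr rfl hc, ← Finset.prod_add]
      simp
    refine Finset.sum_congr rfl fun A hA => ?_
    have hA' : A ⊆ NL := Finset.mem_powerset.mp hA
    have hAm : A.card ≤ NL.card := Finset.card_le_card hA'
    have hc2 : ∀ B ∈ L.powerset, f (A ∪ B)
        = (q ^ (L.card - B.card) * (1 - q) ^ B.card) *
          (q ^ (NL.card - A.card) * ((1 - q) ^ A.card * t ^ (M.rank - M.rk A))) := by
      intro B hB
      have hB' : B ⊆ L := Finset.mem_powerset.mp hB
      have hdAB : Disjoint A B := hdisj.mono hA' hB'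
      have hcard : (A ∪ B).card = A.card + B.card := Finset.card_union_of_disjoint hdAB
      have hrkU : M.rk (A ∪ B) = M.rk A := M.rk_union_loops A fun b hb => (hmemL b).mp (hB' hb)
      have hBl : B.card ≤ L.card := Finset.card_le_card hB'
      rw [hfdef]
      simp only
      rw [hcard, hrkU, show Fintype.card α - (A.card + B.card)
          = (L.card - B.card) + (NL.card - A.card) by omega, pow_add, pow_add]
      ring
    rw [Finset.sum_congr rfl hc2, ← Finset.sum_mul, hbin, one_mul]
  · -- degree in t
    refine le_antisymm ?_ ?_
    · rw [hPdef]
      refine (MvPolynomial.degreeOf_sum_le _ _ _).trans (Finset.sup_le fun A hA => ?_)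
      refine (MvPolynomial.degreeOf_mul_le _ _ _).trans ?_
      have e1 : MvPolynomial.degreeOf 1
          ((MvPolynomial.X 0 : MvPolynomial (Fin 2) ℤ) ^ (NL.card - A.card) *
            (1 - MvPolynomial.X 0) ^ A.card) = 0 :=
        Yaux_deg1 _ (Yaux_vars _ _)
      have e2 : MvPolynomial.degreeOf 1
          ((MvPolynomial.X 1 : MvPolynomial (Fin 2) ℤ) ^ (M.rank - M.rk A))
          ≤ M.rank - M.rk A := by
        refine (MvPolynomial.degreeOf_pow_le _ _ _).trans ?_
        rw [MvPolynomial.degreeOf_X]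
        simp
      rw [e1]
      omega
    · have := MvPolynomial.monomial_le_degreeOf 1 hdP
      omega
  · -- degree in q
    refine le_antisymm ?_ ?_
    · rw [hPdef]
      refine (MvPolynomial.degreeOf_sum_le _ _ _).trans (Finset.sup_le fun A hA => ?_)
      have hAc : A.card ≤ NL.card := Finset.card_le_card (Finset.mem_powerset.mp hA)
      refine (MvPolynomial.degreeOf_mul_le _ _ _).trans ?_
      have e3 : MvPolynomial.degreeOf 0
          ((MvPolynomial.X 1 : MvPolynomial (Fin 2) ℤ) ^ (M.rank - M.rk A)) = 0 := by
        refine Nat.le_zero.mp ((MvPolynomial.degreeOf_pow_le _ _ _).trans ?_)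
        rw [MvPolynomial.degreeOf_X]
        simp
      rw [e3, add_zero]
      refine (MvPolynomial.degreeOf_mul_le _ _ _).trans ?_
      have e4 : MvPolynomial.degreeOf 0
          ((MvPolynomial.X 0 : MvPolynomial (Fin 2) ℤ) ^ (NL.card - A.card))
          ≤ NL.card - A.card := by
        refine (MvPolynomial.degreeOf_pow_le _ _ _).trans ?_
        rw [MvPolynomial.degreeOf_X]
        simp
      have e5 : MvPolynomial.degreeOf 0
          (((1 : MvPolynomial (Fin 2) ℤ) - MvPolynomial.X 0) ^ A.card) ≤ A.card := by
        refine (MvPolynomial.degreeOf_pow_le _ _ _).trans ?_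
        have := Yaux_deg0_sub
        calc A.card * ((1 : MvPolynomial (Fin 2) ℤ) - MvPolynomial.X 0).degreeOf 0
            ≤ A.card * 1 := Nat.mul_le_mul_left _ this
          _ = A.card := by omega
      omega
    · have := MvPolynomial.monomial_le_degreeOf 0 hdP
      omega
end

section
/- Let M = (E,ρ) be a finite matroid of rank d ≥ 1, let 0 ≤ i ≤ d−1, and let S ∈ 𝒮ᵢ^M. Then (−1)^{#S−d+1+i} μᵢ^M(S) ≥ 0; moreover if S contains no loops of M then (−1)^{#S−d+1+i} μᵢ^M(S) > 0. -/
open Finset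

section AuxMuSign

open Finset

variable {α : Type*} [DecidableEq α] [Fintype α]

private lemma negpow_congr {a b : ℕ} (h : a % 2 = b % 2) : (-1:ℤ)^a = (-1:ℤ)^b := by
  rcases Nat.even_or_odd a with ha | ha
  · have hb : Even b := by rw [Nat.even_iff] at *; omega
    rw [ha.neg_one_pow, hb.neg_one_pow]
  · have hb : Odd b := by rw [Nat.odd_iff] at *; omega
    rw [ha.neg_one_pow, hb.neg_one_pow]

private lemma alt_choose_sum (n j : ℕ) :
    ∑ k ∈ Finset.range (j+1), (-1:ℤ)^k * ((n+1).choose k) = (-1)^j * (n.choose j) := by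
  induction j with
  | zero => simp
  | succ j ih =>
      rw [Finset.sum_range_succ, ih, Nat.choose_succ_succ]
      push_cast
      ring

private lemma rk_insert_le (M : FinMatroid α) (e : α) (A : Finset α) :
    M.rk (insert e A) ≤ M.rk A + 1 := by
  have h := M.rk_submod A {e}
  have h1 : A ∪ {e} = insert e A := by ext x; simp [or_comm]
  have h2 := M.rk_le_card {e}
  simp only [h1, Finset.card_singleton] at h h2
  omega

/-- Core positivity lemma for the "generalized contraction" sums. -/
private lemma core (M : FinMatroid α) (n : ℕ) :
    ∀ C S : Finset α, S.card = n → Disjoint C S → ∀ s : ℕ, M.rk C ≤ s →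
    s + 1 ≤ M.rk (S ∪ C) →
    (0 ≤ (-1:ℤ)^(s - M.rk C) *
        ∑ T ∈ S.powerset, (if M.rk (T ∪ C) ≤ s then (-1:ℤ)^T.card else 0)) ∧
    ((∀ e ∈ S, M.rk C < M.rk (insert e C)) →
      0 < (-1:ℤ)^(s - M.rk C) *
        ∑ T ∈ S.powerset, (if M.rk (T ∪ C) ≤ s then (-1:ℤ)^T.card else 0)) := by
  induction n using Nat.strong_induction_on with
  | _ n IH =>
  intro C S hn hdisj s hCs hSC
  by_cases hloop : ∃ e ∈ S, M.rk (insert e C) ≤ M.rk C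
  · -- a loop over C : the sum vanishes
    obtain ⟨e, heS, he⟩ := hloop
    have hsum : ∑ T ∈ S.powerset, (if M.rk (T ∪ C) ≤ s then (-1:ℤ)^T.card else 0) = 0 := by
      have hS' : S = insert e (S.erase e) := (Finset.insert_erase heS).symm
      have heS' : e ∉ S.erase e := Finset.notMem_erase e S
      rw [hS', Finset.sum_powerset_insert heS', ← Finset.sum_add_distrib]
      apply Finset.sum_eq_zero
      intro T hT
      have heT : e ∉ T := fun h => heS' (Finset.mem_powerset.mp hT h)
      have hrkeq : M.rk (insert e T ∪ C) = M.rk (T ∪ C) := by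
        have hsub := M.rk_submod (T ∪ C) (insert e C)
        have h1 : (T ∪ C) ∪ insert e C = insert e T ∪ C := by
          ext x; simp only [Finset.mem_union, Finset.mem_insert]; tauto
        have h3 := M.rk_mono (show C ⊆ (T ∪ C) ∩ insert e C by
          intro x hx; simp [hx])
        have h4 := M.rk_mono (show T ∪ C ⊆ insert e T ∪ C from
          Finset.union_subset_union (Finset.subset_insert e T) le_rfl)
        rw [h1] at hsub
        omega
      rw [hrkeq, Finset.card_insert_of_notMem heT, pow_succ]
      by_cases hc : M.rk (T ∪ C) ≤ s
      · rw [if_pos hc, if_pos hc]; ring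
      · rw [if_neg hc, if_neg hc]; ring
    rw [hsum, mul_zero]
    exact ⟨le_rfl, fun h => absurd he (not_le.mpr (h e heS))⟩
  · push_neg at hloop
    have hins : ∀ e ∈ S, M.rk (insert e C) = M.rk C + 1 := fun e he =>
      le_antisymm (rk_insert_le M e C) (hloop e he)
    have hSne : S.Nonempty := by
      rcases S.eq_empty_or_nonempty with h | h
      · subst h; rw [Finset.empty_union] at hSC; omega
      · exact h
    suffices hpos : 0 < (-1:ℤ)^(s - M.rk C) *
        ∑ T ∈ S.powerset, (if M.rk (T ∪ C) ≤ s then (-1:ℤ)^T.card else 0) by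
      exact ⟨le_of_lt hpos, fun _ => hpos⟩
    by_cases hco : ∃ e ∈ S, M.rk (S ∪ C) ≤ M.rk (S.erase e ∪ C)
    · -- deletion-contraction at a non-coloop e
      obtain ⟨e, heS, hrke⟩ := hco
      have herk : M.rk (S.erase e ∪ C) = M.rk (S ∪ C) :=
        le_antisymm (M.rk_mono (Finset.union_subset_union (Finset.erase_subset e S) le_rfl)) hrke
      have heS' : e ∉ S.erase e := Finset.notMem_erase e S
      have hcard' : (S.erase e).card < n := by
        rw [← hn]; exact Finset.card_lt_card (Finset.erase_ssubset heS)
      have hdisj' : Disjoint C (S.erase e) := hdisj.mono_right (Finset.erase_subset e S)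
      have hSC' : s + 1 ≤ M.rk (S.erase e ∪ C) := by rw [herk]; exact hSC
      have h1 := (IH (S.erase e).card hcard' C (S.erase e) rfl hdisj' s hCs hSC').2
        (fun e' he' => hloop e' (Finset.mem_of_mem_erase he'))
      -- split the sum
      have hS'' : S = insert e (S.erase e) := (Finset.insert_erase heS).symm
      have hunion : S.erase e ∪ insert e C = S ∪ C := by
        ext x
        simp only [Finset.mem_union, Finset.mem_erase, Finset.mem_insert]
        constructor
        · rintro (⟨-, h⟩ | h | h)
          · exact Or.inl h
          · exact Or.inl (h ▸ heS)
          · exact Or.inr h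
        · intro h
          by_cases hx : x = e
          · exact Or.inr (Or.inl hx)
          · rcases h with h | h
            · exact Or.inl ⟨hx, h⟩
            · exact Or.inr (Or.inr h)
      have hsplit : ∑ T ∈ S.powerset, (if M.rk (T ∪ C) ≤ s then (-1:ℤ)^T.card else 0)
          = (∑ T ∈ (S.erase e).powerset, (if M.rk (T ∪ C) ≤ s then (-1:ℤ)^T.card else 0))
            - ∑ T ∈ (S.erase e).powerset,
                (if M.rk (T ∪ insert e C) ≤ s then (-1:ℤ)^T.card else 0) := by
        conv_lhs => rw [hS'']
        rw [Finset.sum_powerset_insert heS', sub_eq_add_neg, ← Finset.sum_neg_distrib]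
        congr 1
        apply Finset.sum_congr rfl
        intro T hT
        have heT : e ∉ T := fun h => heS' (Finset.mem_powerset.mp hT h)
        have h1' : insert e T ∪ C = T ∪ insert e C := by
          ext x; simp only [Finset.mem_union, Finset.mem_insert]; tauto
        rw [h1', Finset.card_insert_of_notMem heT, pow_succ]
        by_cases hc : M.rk (T ∪ insert e C) ≤ s
        · rw [if_pos hc, if_pos hc]; ring
        · rw [if_neg hc, if_neg hc]; ring
      rw [hsplit]
      have hCe := hins e heS
      by_cases hlt : M.rk C < s
      · -- use both IH's
        have hdisj'' : Disjoint (insert e C) (S.erase e) := by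
          rw [Finset.disjoint_left]
          intro x hx hx'
          rcases Finset.mem_insert.mp hx with h | h
          · exact heS' (h ▸ hx')
          · exact (Finset.disjoint_left.mp hdisj' h) hx'
        have hSC'' : s + 1 ≤ M.rk (S.erase e ∪ insert e C) := by rw [hunion]; exact hSC
        have h2 := (IH (S.erase e).card hcard' (insert e C) (S.erase e) rfl hdisj'' s
          (by omega) hSC'').1
        rw [hCe] at h2
        have hexp : s - M.rk C = (s - (M.rk C + 1)) + 1 := by omega
        rw [hexp, pow_succ] at h1 ⊢
        set x := (-1:ℤ)^(s - (M.rk C + 1))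
        set A := ∑ T ∈ (S.erase e).powerset, (if M.rk (T ∪ C) ≤ s then (-1:ℤ)^T.card else 0)
        set B := ∑ T ∈ (S.erase e).powerset,
          (if M.rk (T ∪ insert e C) ≤ s then (-1:ℤ)^T.card else 0)
        have : x * -1 * (A - B) = x * -1 * A + x * B := by ring
        rw [this]
        have h2' : (0:ℤ) ≤ x * B := h2
        linarith
      · -- contraction sum vanishes
        have hs : s = M.rk C := by omega
        have hzero : ∑ T ∈ (S.erase e).powerset,
            (if M.rk (T ∪ insert e C) ≤ s then (-1:ℤ)^T.card else 0) = 0 := by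
          apply Finset.sum_eq_zero
          intro T hT
          have : M.rk (insert e C) ≤ M.rk (T ∪ insert e C) :=
            M.rk_mono (Finset.subset_union_right)
          rw [if_neg (by omega)]
        rw [hzero, sub_zero]
        exact h1
    · -- every element is a coloop over C: T ↦ rk(T ∪ C) = rk C + |T|
      push_neg at hco
      have hstep : ∀ e ∈ S, ∀ T ⊆ S, e ∈ T →
          M.rk (T ∪ C) = M.rk (T.erase e ∪ C) + 1 := by
        intro e he T hTS heT
        have hle : M.rk (T ∪ C) ≤ M.rk (T.erase e ∪ C) + 1 := by
          have hh : insert e (T.erase e ∪ C) = T ∪ C := by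
            rw [← Finset.insert_union, Finset.insert_erase heT]
          calc M.rk (T ∪ C) = M.rk (insert e (T.erase e ∪ C)) := by rw [hh]
            _ ≤ M.rk (T.erase e ∪ C) + 1 := rk_insert_le M _ _
        have hge : M.rk (T.erase e ∪ C) + 1 ≤ M.rk (T ∪ C) := by
          have hsub := M.rk_submod (T ∪ C) (S.erase e ∪ C)
          have hU : (T ∪ C) ∪ (S.erase e ∪ C) = S ∪ C := by
            ext x
            simp only [Finset.mem_union, Finset.mem_erase]
            constructor
            · rintro ((h | h) | ⟨-, h⟩ | h)
              · exact Or.inl (hTS h)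
              · exact Or.inr h
              · exact Or.inl h
              · exact Or.inr h
            · rintro (h | h)
              · by_cases hx : x = e
                · exact Or.inl (Or.inl (hx ▸ heT))
                · exact Or.inr (Or.inl ⟨hx, h⟩)
              · exact Or.inl (Or.inr h)
          have hI : (T ∪ C) ∩ (S.erase e ∪ C) = T.erase e ∪ C := by
            ext x
            simp only [Finset.mem_inter, Finset.mem_union, Finset.mem_erase]
            constructor
            · rintro ⟨h | h, h' | h'⟩
              · exact Or.inl ⟨h'.1, h⟩
              · exact Or.inr h'
              · exact Or.inr h
              · exact Or.inr h
            · rintro (⟨hne, h⟩ | h)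
              · exact ⟨Or.inl h, Or.inl ⟨hne, hTS h⟩⟩
              · exact ⟨Or.inr h, Or.inr h⟩
          have h5 := hco e he
          have h6 : M.rk (S ∪ C) ≤ M.rk (S.erase e ∪ C) + 1 := by
            have hh : insert e (S.erase e ∪ C) = S ∪ C := by
              rw [← Finset.insert_union, Finset.insert_erase he]
            calc M.rk (S ∪ C) = M.rk (insert e (S.erase e ∪ C)) := by rw [hh]
              _ ≤ M.rk (S.erase e ∪ C) + 1 := rk_insert_le M _ _
          rw [hU, hI] at hsub
          omega
        omega
      have hcardrk : ∀ k : ℕ, ∀ T ⊆ S, T.card = k → M.rk (T ∪ C) = M.rk C + T.card := by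
        intro k
        induction k with
        | zero =>
            intro T hT h0
            rw [Finset.card_eq_zero.mp h0]
            simp
        | succ k ih =>
            intro T hTS hk
            obtain ⟨e, he⟩ := Finset.card_pos.mp (show 0 < T.card by omega)
            have h1 := hstep e (hTS he) T hTS he
            have h2 := ih (T.erase e) ((Finset.erase_subset e T).trans hTS)
              (by rw [Finset.card_erase_of_mem he]; omega)
            have h3 : (T.erase e).card = T.card - 1 := Finset.card_erase_of_mem he
            omega
      have hrkS : M.rk (S ∪ C) = M.rk C + S.card := hcardrk S.card S le_rfl rfl
      have hn1 : 1 ≤ S.card := Finset.card_pos.mpr hSne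
      have hjle : s - M.rk C ≤ S.card - 1 := by omega
      have hsum : ∑ T ∈ S.powerset, (if M.rk (T ∪ C) ≤ s then (-1:ℤ)^T.card else 0)
          = ∑ T ∈ S.powerset, (if T.card ≤ s - M.rk C then (-1:ℤ)^T.card else 0) := by
        apply Finset.sum_congr rfl
        intro T hT
        rw [hcardrk T.card T (Finset.mem_powerset.mp hT) rfl]
        exact if_congr (by omega) rfl rfl
      rw [hsum]
      rw [Finset.sum_powerset_apply_card (fun k => if k ≤ s - M.rk C then (-1:ℤ)^k else 0)]
      have htrunc : ∑ k ∈ Finset.range (S.card + 1),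
            (S.card.choose k) • (if k ≤ s - M.rk C then (-1:ℤ)^k else 0)
          = ∑ k ∈ Finset.range (s - M.rk C + 1), (-1:ℤ)^k * (S.card.choose k) := by
        rw [← Finset.sum_subset (Finset.range_subset_range.mpr (by omega : s - M.rk C + 1 ≤ S.card + 1))]
        · apply Finset.sum_congr rfl
          intro k hk
          rw [Finset.mem_range] at hk
          rw [if_pos (by omega), nsmul_eq_mul]
          ring
        · intro k hk hk'
          rw [Finset.mem_range] at hk hk'
          rw [if_neg (by omega), smul_zero]
      rw [htrunc]
      have hSc : S.card = (S.card - 1) + 1 := by omega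
      rw [hSc, alt_choose_sum (S.card - 1) (s - M.rk C), ← mul_assoc, ← pow_add]
      rw [Even.neg_one_pow ⟨s - M.rk C, rfl⟩, one_mul]
      exact_mod_cast Nat.choose_pos hjle

private lemma sum_interval_pow (S U : Finset α) (hU : U ⊆ S) :
    ∑ T ∈ S.powerset.filter (fun T => U ⊆ T), (-1:ℤ)^(T.card - U.card)
      = if U = S then 1 else 0 := by
  have h1 : ∑ T ∈ S.powerset.filter (fun T => U ⊆ T), (-1:ℤ)^(T.card - U.card)
      = ∑ V ∈ (S \ U).powerset, (-1:ℤ)^V.card := by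
    apply Finset.sum_nbij' (i := fun T => T \ U) (j := fun V => V ∪ U)
    · intro T hT
      rw [Finset.mem_filter, Finset.mem_powerset] at hT
      rw [Finset.mem_powerset]
      exact Finset.sdiff_subset_sdiff hT.1 le_rfl
    · intro V hV
      rw [Finset.mem_powerset] at hV
      rw [Finset.mem_filter, Finset.mem_powerset]
      refine ⟨Finset.union_subset (hV.trans Finset.sdiff_subset) hU, Finset.subset_union_right⟩
    · intro T hT
      rw [Finset.mem_filter, Finset.mem_powerset] at hT
      exact Finset.sdiff_union_of_subset hT.2
    · intro V hV
      rw [Finset.mem_powerset] at hV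
      rw [Finset.union_sdiff_right]
      exact Finset.sdiff_eq_self_of_disjoint (Finset.disjoint_right.mpr
        (fun x hxU hxV => (Finset.mem_sdiff.mp (hV hxV)).2 hxU))
    · intro T hT
      rw [Finset.mem_filter, Finset.mem_powerset] at hT
      rw [Finset.card_sdiff_of_subset hT.2]
  rw [h1, Finset.sum_powerset_neg_one_pow_card]
  by_cases h : U = S
  · rw [if_pos (by simp [h]), if_pos h]
  · rw [if_neg (fun he => h (le_antisymm hU (Finset.sdiff_eq_empty_iff_subset.mp he))),
      if_neg h]

/-- `∑_{U ⊆ T} (-1)^(|T|-|U|) = [T = ∅]`. -/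
private lemma sum_pow_card_sub (T : Finset α) :
    ∑ U ∈ T.powerset, (-1:ℤ)^(T.card - U.card) = if T = ∅ then 1 else 0 := by
  rw [← Finset.sum_powerset_neg_one_pow_card]
  apply Finset.sum_nbij' (i := fun U => T \ U) (j := fun V => T \ V)
  · intro U hU
    rw [Finset.mem_powerset] at hU ⊢
    exact Finset.sdiff_subset
  · intro V hV
    rw [Finset.mem_powerset] at hV ⊢
    exact Finset.sdiff_subset
  · intro U hU
    rw [Finset.mem_powerset] at hU
    exact Finset.sdiff_sdiff_eq_self hU
  · intro V hV
    rw [Finset.mem_powerset] at hV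
    exact Finset.sdiff_sdiff_eq_self hV
  · intro U hU
    rw [Finset.mem_powerset] at hU
    rw [Finset.card_sdiff_of_subset hU]

open Classical in
private lemma mob_formula (P : Finset α → Prop)
    (hup : ∀ ⦃U T : Finset α⦄, U ⊆ T → P U → P T) (h0 : ¬ P ∅) :
    ∀ n : ℕ, ∀ S : Finset α, S.card = n → FinMatroid.mob P S =
      if P S then ∑ U ∈ S.powerset.filter (fun U => ¬ P U), (-1:ℤ)^(S.card - U.card)
      else 0 := by
  intro n
  induction n using Nat.strong_induction_on with
  | _ n IH =>
  intro S hn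
  by_cases hPS : P S
  · rw [FinMatroid.mob, if_pos hPS, if_pos hPS]
    rw [Finset.sum_attach (S.powerset.erase S) (fun T => FinMatroid.mob P T)]
    have hrec : ∀ T ∈ S.powerset.erase S, FinMatroid.mob P T =
        if P T then ∑ U ∈ T.powerset.filter (fun U => ¬ P U), (-1:ℤ)^(T.card - U.card)
        else 0 := by
      intro T hT
      rw [Finset.mem_erase, Finset.mem_powerset] at hT
      have hlt : T.card < n := hn ▸ Finset.card_lt_card (hT.2.ssubset_of_ne hT.1)
      exact IH T.card hlt T rfl
    rw [Finset.sum_congr rfl hrec]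
    -- key : the ν-sum over the whole powerset is -1
    have key : ∑ T ∈ S.powerset,
        (if P T then ∑ U ∈ T.powerset.filter (fun U => ¬ P U), (-1:ℤ)^(T.card - U.card)
         else 0) = -1 := by
      have hsplit : ∀ T ∈ S.powerset,
          (if P T then ∑ U ∈ T.powerset.filter (fun U => ¬ P U), (-1:ℤ)^(T.card - U.card)
           else 0)
          = (∑ U ∈ T.powerset.filter (fun U => ¬ P U), (-1:ℤ)^(T.card - U.card))
            - (if ¬ P T then
                ∑ U ∈ T.powerset.filter (fun U => ¬ P U), (-1:ℤ)^(T.card - U.card) else 0) := by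
        intro T _
        by_cases h : P T <;> simp [h]
      rw [Finset.sum_congr rfl hsplit, Finset.sum_sub_distrib]
      have hfirst : ∑ T ∈ S.powerset,
          ∑ U ∈ T.powerset.filter (fun U => ¬ P U), (-1:ℤ)^(T.card - U.card) = 0 := by
        rw [Finset.sum_comm' (t' := S.powerset.filter (fun U => ¬ P U))
          (s' := fun U => S.powerset.filter (fun T => U ⊆ T))
          (f := fun T U => (-1:ℤ)^(T.card - U.card))
          (by
            intro T U
            simp only [Finset.mem_filter, Finset.mem_powerset]
            constructor
            · rintro ⟨h1, h2, h3⟩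
              exact ⟨⟨h1, h2⟩, h2.trans h1, h3⟩
            · rintro ⟨⟨h1, h2⟩, -, h3⟩
              exact ⟨h1, h2, h3⟩)]
        apply Finset.sum_eq_zero
        intro U hU
        rw [Finset.mem_filter, Finset.mem_powerset] at hU
        rw [sum_interval_pow S U hU.1, if_neg]
        intro h
        exact hU.2 (h ▸ hPS)
      have hsecond : ∑ T ∈ S.powerset,
          (if ¬ P T then
            ∑ U ∈ T.powerset.filter (fun U => ¬ P U), (-1:ℤ)^(T.card - U.card) else 0) = 1 := by
        have heq : ∀ T ∈ S.powerset,
            (if ¬ P T then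
              ∑ U ∈ T.powerset.filter (fun U => ¬ P U), (-1:ℤ)^(T.card - U.card) else 0)
            = if T = ∅ then 1 else 0 := by
          intro T _
          by_cases h : P T
          · rw [if_neg (by simpa using h), if_neg]
            rintro rfl
            exact h0 h
          · rw [if_pos h]
            have hfil : T.powerset.filter (fun U => ¬ P U) = T.powerset := by
              apply Finset.filter_true_of_mem
              intro U hU hPU
              exact h (hup (Finset.mem_powerset.mp hU) hPU)
            rw [hfil, sum_pow_card_sub]
        rw [Finset.sum_congr rfl heq, Finset.sum_ite_eq' S.powerset ∅ (fun _ => (1:ℤ))]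
        rw [if_pos (Finset.mem_powerset.mpr (Finset.empty_subset S))]
      rw [hfirst, hsecond]
      ring
    have hmem : S ∈ S.powerset := Finset.mem_powerset.mpr le_rfl
    have herase := Finset.sum_erase_add S.powerset
      (fun T => if P T then
        ∑ U ∈ T.powerset.filter (fun U => ¬ P U), (-1:ℤ)^(T.card - U.card) else 0) hmem
    rw [key] at herase
    simp only [if_pos hPS] at herase
    linarith [herase]
  · rw [FinMatroid.mob, if_neg hPS, if_neg hPS]

end AuxMuSign


/-- the sign of `μᵢ^M(S)` is `(-1)^{#S-d+1+i}`, weakly in general and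
strictly when `S` contains no loop of `M`. -/
theorem mu_sign {α : Type*} [DecidableEq α] [Fintype α] (M : FinMatroid α)
    (hd : 1 ≤ M.rank) (i : ℤ) (hi0 : 0 ≤ i) (hi : i ≤ (M.rank : ℤ) - 1)
    (S : Finset α) (hS : M.Smem i S) :
    0 ≤ (-1 : ℤ) ^ (((S.card : ℤ) - M.rank + 1 + i).toNat) * M.mu i S ∧
      ((∀ f ∈ S, ¬ M.IsLoop f) →
        0 < (-1 : ℤ) ^ (((S.card : ℤ) - M.rank + 1 + i).toNat) * M.mu i S) := by
  classical
  set d := M.rank with hd'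
  -- the threshold
  set s : ℕ := ((d : ℤ) - 1 - i).toNat with hsdef
  have hs : (s : ℤ) = (d : ℤ) - 1 - i := Int.toNat_of_nonneg (by omega)
  -- basic facts
  have hrkS : (d : ℤ) - i ≤ (M.rk S : ℤ) := hS
  have hcardS : M.rk S ≤ S.card := M.rk_le_card S
  -- the exponent
  set h : ℕ := ((S.card : ℤ) - d + 1 + i).toNat with hhdef
  have hh : (h : ℤ) = (S.card : ℤ) - d + 1 + i := Int.toNat_of_nonneg (by
    have : (M.rk S : ℤ) ≤ (S.card : ℤ) := by exact_mod_cast hcardS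
    omega)
  -- upward closure and emptiness
  have hup : ∀ ⦃U T : Finset α⦄, U ⊆ T → M.Smem i U → M.Smem i T := by
    intro U T hUT hU
    have := M.rk_mono hUT
    unfold FinMatroid.Smem at *
    have : (M.rk U : ℤ) ≤ (M.rk T : ℤ) := by exact_mod_cast this
    omega
  have h0 : ¬ M.Smem i ∅ := by
    unfold FinMatroid.Smem
    rw [M.rk_empty]
    push_cast
    omega
  -- the explicit formula for mu
  have hmu : M.mu i S =
      ∑ U ∈ S.powerset.filter (fun U => ¬ M.Smem i U), (-1:ℤ)^(S.card - U.card) := by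
    have := mob_formula (M.Smem i) hup h0 S.card S rfl
    rw [FinMatroid.mu, this, if_pos hS]
  -- the condition ¬ Smem i U ↔ rk U ≤ s
  have hcond : ∀ U : Finset α, (¬ M.Smem i U) ↔ M.rk U ≤ s := by
    intro U
    unfold FinMatroid.Smem
    constructor
    · intro hU
      have : (M.rk U : ℤ) < (d : ℤ) - i := by omega
      omega
    · intro hU
      have : (M.rk U : ℤ) ≤ (s : ℤ) := by exact_mod_cast hU
      omega
  -- apply the core lemma with C = ∅
  have hcore := core M S.card ∅ S rfl (Finset.disjoint_empty_left S) s
    (by rw [M.rk_empty]; omega)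
    (by rw [Finset.union_empty]
        have : (s : ℤ) + 1 ≤ (M.rk S : ℤ) := by omega
        exact_mod_cast this)
  rw [M.rk_empty] at hcore
  simp only [Finset.union_empty, Nat.sub_zero] at hcore
  -- identify the two signed sums
  have hids : (-1 : ℤ) ^ h * M.mu i S
      = (-1:ℤ)^s * ∑ T ∈ S.powerset, (if M.rk T ≤ s then (-1:ℤ)^T.card else 0) := by
    rw [hmu, Finset.sum_filter, Finset.mul_sum, Finset.mul_sum]
    apply Finset.sum_congr rfl
    intro T hT
    have hTS : T.card ≤ S.card := Finset.card_le_card (Finset.mem_powerset.mp hT)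
    rw [mul_ite, mul_zero, mul_ite, mul_zero]
    rw [if_congr (hcond T) rfl rfl]
    by_cases hc : M.rk T ≤ s
    · rw [if_pos hc, if_pos hc, ← pow_add, ← pow_add]
      apply negpow_congr
      omega
    · rw [if_neg hc, if_neg hc]
  rw [hids]
  constructor
  · exact hcore.1
  · intro hloops
    apply hcore.2
    intro e heS
    have hle := M.rk_le_card {e}
    rw [Finset.card_singleton] at hle
    have hne : M.rk {e} ≠ 0 := hloops e heS
    have : insert e (∅ : Finset α) = {e} := rfl
    rw [this]
    omega
end
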